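/- arXiv:math-ph/9910034 — 7 statements merged into one kernel-verified Lean document; each statement's English description precedes it below -/
import Mathlib

section
/- Let α ∈ (2,∞) and let F : (0,∞) → (0,∞) be continuous, strictly increasing with lim_{t→∞} F(t) = ∞, and regularly varying of index 1/α. Let W : ℝ² → (0,∞) be measurable, Lebesgue integrable, and have regular (F,α)-decay. Then lim_{t→∞} [F(t)]^{-2} ∫_{ℝ²} (1 − e^{−t W(x)}) dx = π Γ((α−2)/α), where Γ denotes Euler's gamma function. -/
open MeasureTheory Filter Real

noncomputable section

abbrev E2 := EuclideanSpace ℝ (Fin 2)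

/-!
With `ν s = |{x | s < W x}|`, the layer-cake formula gives
`∫ (1 - e^{-t W}) = ∫₀^∞ e^{-u} ν(u / t) du`. Outside a large disc the decay condition squeezes
`{W > s} = {F(1/W) < F(1/s)}` between the discs of radii `F(1/s) / (1 ± ε)`, so
`ν s ~ π F(1/s)²` as `s → 0⁺`. Regular variation gives `F(t/u) / F(t) → u^{-1/α}`, hence
`ν(u/t) / F(t)² → π u^{-2/α}`, while Potter's bound `F(c t) ≤ 2^γ c^γ F(t)` (`c ≥ 1`,
`1/α < γ < 1/2`) dominates the integrand by `e^{-u} (P + Q u^{-2γ})`, which is integrable since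
`2γ < 1`. Dominated convergence yields `π ∫₀^∞ e^{-u} u^{-2/α} du = π Γ(1 - 2/α)`.
-/

open Set Topology

theorem measurable_toReal_measure_setOf_lt {X : Type*} [MeasurableSpace X] {μ : Measure X}
    {f : X → ℝ} : Measurable fun s => (μ {x | s < f x}).toReal :=
  ENNReal.measurable_toReal.comp <| Antitone.measurable fun _ _ hab =>
    measure_mono fun _ hx => hab.trans_lt hx

theorem integral_one_sub_exp_neg_mul {X : Type*} [MeasurableSpace X] {μ : Measure X} {f : X → ℝ}
    (hf : Integrable f μ) (hf0 : ∀ x, 0 ≤ f x) {t : ℝ} (ht : 0 < t) :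
    ∫ x, (1 - exp (-(t * f x))) ∂μ = ∫ u in Ioi 0, exp (-u) * (μ {x | u / t < f x}).toReal := by
  have htf0 : 0 ≤ᵐ[μ] fun x => t * f x := .of_forall fun x => by have := hf0 x; positivity
  have hlayer := lintegral_comp_eq_lintegral_meas_lt_mul μ htf0 (hf.aemeasurable.const_mul t)
    (fun s _ => (by fun_prop : Continuous fun u : ℝ => exp (-u)).intervalIntegrable 0 s)
    (.of_forall fun u => (exp_pos _).le)
  have hprim : ∀ s, ∫ u in (0 : ℝ)..s, exp (-u) = 1 - exp (-s) := fun s => by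
    simp [intervalIntegral.integral_comp_neg (fun u => exp u), integral_exp]
  have hfin : ∀ u > 0, μ {x | u / t < f x} ≠ ⊤ := fun u hu =>
    ((hf.measure_ge_lt_top (div_pos hu ht)).trans_le'
      (measure_mono fun x (hx : u / t < f x) => hx.le)).ne
  have hmeas : Measurable fun u => exp (-u) * (μ {x | u / t < f x}).toReal :=
    (by fun_prop : Measurable fun u : ℝ => exp (-u)).mul
      (measurable_toReal_measure_setOf_lt.comp (measurable_id.div_const t))
  rw [integral_eq_lintegral_of_nonneg_ae (.of_forall fun x => ?_) (by fun_prop),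
    integral_eq_lintegral_of_nonneg_ae (.of_forall fun u => by positivity)
      hmeas.aestronglyMeasurable]
  · congr 1
    simp only [← hprim]
    rw [hlayer]
    refine setLIntegral_congr_fun measurableSet_Ioi fun u (hu : 0 < u) => ?_
    rw [ENNReal.ofReal_mul (exp_pos _).le, ENNReal.ofReal_toReal (hfin u hu), mul_comm]
    congr 3
    ext x
    exact (div_lt_iff₀' ht).symm
  · have := hf0 x
    simpa using exp_le_one_iff.2 (neg_nonpos.2 (by positivity : 0 ≤ t * f x))

theorem tendsto_of_forall_eventually_mem_Icc {α ι κ : Type*} [TopologicalSpace α] [LinearOrder α]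
    [OrderTopology α] {l : Filter ι} {l' : Filter κ} [l'.NeBot] {f : ι → α} {lo hi : κ → α}
    {L : α} (hlo : Tendsto lo l' (𝓝 L)) (hhi : Tendsto hi l' (𝓝 L))
    (h : ∀ᶠ k in l', ∀ᶠ i in l, f i ∈ Icc (lo k) (hi k)) : Tendsto f l (𝓝 L) := by
  refine tendsto_order.2 ⟨fun a ha => ?_, fun b hb => ?_⟩
  · obtain ⟨k, hk, hak⟩ := (h.and (hlo.eventually (lt_mem_nhds ha))).exists
    filter_upwards [hk] with i hi using hak.trans_le hi.1
  · obtain ⟨k, hk, hkb⟩ := (h.and (hhi.eventually (gt_mem_nhds hb))).exists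
    filter_upwards [hk] with i hi using hi.2.trans_lt hkb

theorem exists_forall_mul_norm_le_le {E : Type*} [NormedAddCommGroup E] {g : E → ℝ}
    (hg : Tendsto (fun x => g x / ‖x‖) (comap (fun x => ‖x‖) atTop) (𝓝 1)) {a b : ℝ}
    (ha : a < 1) (hb : 1 < b) :
    ∃ R ≥ 0, ∀ x, R ≤ ‖x‖ → a * ‖x‖ ≤ g x ∧ g x ≤ b * ‖x‖ := by
  obtain ⟨R, hR⟩ := eventually_atTop.1 (eventually_comap.1 (hg.eventually (Icc_mem_nhds ha hb)))
  refine ⟨max R 1, by positivity, fun x hx => ?_⟩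
  have hx0 : 0 < ‖x‖ := one_pos.trans_le ((le_max_right _ _).trans hx)
  obtain ⟨hax, hxb⟩ := hR ‖x‖ ((le_max_left _ _).trans hx) x rfl
  exact ⟨(le_div_iff₀ hx0).1 hax, (div_le_iff₀ hx0).1 hxb⟩

theorem volume_ball_zero_E2 {r : ℝ} (hr : 0 ≤ r) :
    volume (Metric.ball (0 : E2) r) = ENNReal.ofReal (π * r ^ 2) := by
  rw [EuclideanSpace.volume_ball_fin_two, ← ENNReal.ofReal_pow hr,
    ← ENNReal.ofReal_mul (by positivity), mul_comm]

theorem volume_closedBall_zero_E2 {r : ℝ} (hr : 0 ≤ r) :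
    volume (Metric.closedBall (0 : E2) r) = ENNReal.ofReal (π * r ^ 2) := by
  rw [Measure.addHaar_closedBall_eq_addHaar_ball, volume_ball_zero_E2 hr]

theorem volume_setOf_lt_le {g : E2 → ℝ} {a R r : ℝ} (ha : 0 < a) (hR : 0 ≤ R) (hr : 0 ≤ r)
    (hg : ∀ x, R ≤ ‖x‖ → a * ‖x‖ ≤ g x) :
    volume {x | g x < r} ≤ ENNReal.ofReal (π * (R ^ 2 + (r / a) ^ 2)) := by
  have hsub : {x | g x < r} ⊆ Metric.closedBall 0 R ∪ Metric.ball 0 (r / a) := by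
    intro x (hx : g x < r)
    rcases le_or_gt ‖x‖ R with hxR | hxR
    · exact .inl (mem_closedBall_zero_iff.2 hxR)
    · refine .inr (mem_ball_zero_iff.2 ((lt_div_iff₀ ha).2 ?_))
      linarith [hg x hxR.le]
  calc volume {x | g x < r}
      ≤ volume (Metric.closedBall (0 : E2) R) + volume (Metric.ball (0 : E2) (r / a)) :=
        (measure_mono hsub).trans (measure_union_le _ _)
    _ = ENNReal.ofReal (π * (R ^ 2 + (r / a) ^ 2)) := by
        rw [volume_closedBall_zero_E2 hR, volume_ball_zero_E2 (by positivity),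
          ← ENNReal.ofReal_add (by positivity) (by positivity), mul_add]

theorem ofReal_le_volume_setOf_lt {g : E2 → ℝ} {b R r : ℝ} (hb : 0 < b) (hR : 0 ≤ R) (hr : 0 ≤ r)
    (hg : ∀ x, R ≤ ‖x‖ → g x ≤ b * ‖x‖) :
    ENNReal.ofReal (π * ((r / b) ^ 2 - R ^ 2)) ≤ volume {x | g x < r} := by
  have hsub : Metric.ball 0 (r / b) \ Metric.closedBall 0 R ⊆ {x | g x < r} := by
    rintro x ⟨hxb, hxR⟩
    rw [mem_ball_zero_iff, lt_div_iff₀ hb] at hxb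
    rw [mem_closedBall_zero_iff, not_le] at hxR
    exact (hg x hxR.le).trans_lt (by linarith)
  calc ENNReal.ofReal (π * ((r / b) ^ 2 - R ^ 2))
      = volume (Metric.ball (0 : E2) (r / b)) - volume (Metric.closedBall (0 : E2) R) := by
        rw [volume_closedBall_zero_E2 hR, volume_ball_zero_E2 (by positivity), mul_sub,
          ENNReal.ofReal_sub _ (by positivity)]
    _ ≤ volume {x | g x < r} := le_measure_sdiff.trans (measure_mono hsub)

theorem tendsto_toReal_volume_setOf_lt_div_sq {g : E2 → ℝ}
    (hg : Tendsto (fun x => g x / ‖x‖) (comap (fun x => ‖x‖) atTop) (𝓝 1)) :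
    Tendsto (fun r => (volume {x | g x < r}).toReal / r ^ 2) atTop (𝓝 π) := by
  -- The extra `∓ ε` absorbs the disc of radius `R` on which the decay bounds may fail.
  refine tendsto_of_forall_eventually_mem_Icc (l' := 𝓝[>] (0 : ℝ))
    (lo := fun ε => π / (1 + ε) ^ 2 - ε) (hi := fun ε => π / (1 - ε) ^ 2 + ε) ?_ ?_ ?_
  · have h : Tendsto (fun ε : ℝ => π / (1 + ε) ^ 2 - ε) (𝓝 0) (𝓝 (π / (1 + 0) ^ 2 - 0)) :=
      (tendsto_const_nhds.div ((tendsto_const_nhds.add tendsto_id).pow 2) (by norm_num)).sub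
        tendsto_id
    simpa using h.mono_left nhdsWithin_le_nhds
  · have h : Tendsto (fun ε : ℝ => π / (1 - ε) ^ 2 + ε) (𝓝 0) (𝓝 (π / (1 - 0) ^ 2 + 0)) :=
      (tendsto_const_nhds.div ((tendsto_const_nhds.sub tendsto_id).pow 2) (by norm_num)).add
        tendsto_id
    simpa using h.mono_left nhdsWithin_le_nhds
  filter_upwards [Ioo_mem_nhdsGT (zero_lt_one' ℝ)] with ε ⟨hε0, hε1⟩
  obtain ⟨R, hR, hgR⟩ :=
    exists_forall_mul_norm_le_le hg (sub_lt_self 1 hε0) (lt_add_of_pos_right 1 hε0)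
  have hsmall : Tendsto (fun r : ℝ => π * R ^ 2 / r ^ 2) atTop (𝓝 0) :=
    tendsto_const_nhds.div_atTop (tendsto_pow_atTop two_ne_zero)
  filter_upwards [eventually_gt_atTop 0, hsmall.eventually (Iic_mem_nhds hε0)] with r hr hrR
  have hup := volume_setOf_lt_le (sub_pos.2 hε1) hR hr.le fun x hx => (hgR x hx).1
  have hlo := ofReal_le_volume_setOf_lt (by linarith) hR hr.le fun x hx => (hgR x hx).2
  have hfin : volume {x | g x < r} ≠ ⊤ := ne_top_of_le_ne_top ENNReal.ofReal_ne_top hup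
  have hup' := ENNReal.toReal_le_of_le_ofReal (by positivity) hup
  have hlo' := (ENNReal.ofReal_le_iff_le_toReal hfin).1 hlo
  have hrR' : π * R ^ 2 / r ^ 2 ≤ ε := hrR
  have hr2 : 0 < r ^ 2 := by positivity
  constructor
  · rw [le_div_iff₀ hr2]
    have : (π / (1 + ε) ^ 2 - ε) * r ^ 2 ≤ π * ((r / (1 + ε)) ^ 2 - R ^ 2) := by
      rw [div_le_iff₀ hr2] at hrR'
      rw [div_pow]; field_simp; nlinarith
    linarith
  · rw [div_le_iff₀ hr2]
    have : π * (R ^ 2 + (r / (1 - ε)) ^ 2) ≤ (π / (1 - ε) ^ 2 + ε) * r ^ 2 := by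
      rw [div_le_iff₀ hr2] at hrR'
      have : (1 - ε) ≠ 0 := by linarith
      rw [div_pow]; field_simp; nlinarith
    linarith

theorem setOf_lt_eq_setOf_comp_one_div_lt {X : Type*} {F : ℝ → ℝ} {W : X → ℝ}
    (hF : StrictMonoOn F (Ioi 0)) (hW : ∀ x, 0 < W x) {s : ℝ} (hs : 0 < s) :
    {x | s < W x} = {x | F (1 / W x) < F (1 / s)} := by
  ext x
  have hx := hW x
  rw [mem_ofPred_eq, mem_ofPred_eq, hF.lt_iff_lt (one_div_pos.2 hx) (one_div_pos.2 hs),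
    one_div_lt_one_div hx hs]

theorem exists_toReal_volume_setOf_lt_le {g : E2 → ℝ}
    (hg : Tendsto (fun x => g x / ‖x‖) (comap (fun x => ‖x‖) atTop) (𝓝 1)) :
    ∃ A ≥ 0, ∀ r ≥ 0, (volume {x | g x < r}).toReal ≤ A + 4 * π * r ^ 2 := by
  obtain ⟨R, hR, hgR⟩ := exists_forall_mul_norm_le_le hg (by norm_num : (1 / 2 : ℝ) < 1) one_lt_two
  refine ⟨π * R ^ 2, by positivity, fun r hr => ?_⟩
  have h := volume_setOf_lt_le one_half_pos hR hr fun x hx => (hgR x hx).1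
  refine (ENNReal.toReal_le_of_le_ofReal (by positivity) h).trans_eq ?_
  ring

theorem tendsto_toReal_volume_setOf_gt_div_sq {F : ℝ → ℝ} {W : E2 → ℝ}
    (hFmono : StrictMonoOn F (Ioi 0)) (hFtop : Tendsto F atTop atTop) (hWpos : ∀ x, 0 < W x)
    (hWdecay : Tendsto (fun x : E2 => F (1 / W x) / ‖x‖) (comap (fun x : E2 => ‖x‖) atTop) (𝓝 1)) :
    Tendsto (fun s => (volume {x | s < W x}).toReal / F (1 / s) ^ 2) (𝓝[>] 0) (𝓝 π) := by
  have hinv : Tendsto (fun s : ℝ => F (1 / s)) (𝓝[>] 0) atTop := by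
    refine (hFtop.comp tendsto_inv_nhdsGT_zero).congr fun s => ?_
    rw [one_div, Function.comp_apply]
  refine ((tendsto_toReal_volume_setOf_lt_div_sq hWdecay).comp hinv).congr' ?_
  filter_upwards [self_mem_nhdsWithin] with s hs
  simp only [Function.comp_apply, setOf_lt_eq_setOf_comp_one_div_lt hFmono hWpos hs]

theorem exists_potter_bound {F : ℝ → ℝ} {ρ γ : ℝ} (hFpos : ∀ t > 0, 0 < F t)
    (hFmono : MonotoneOn F (Ioi 0)) (hF2 : Tendsto (fun t => F (2 * t) / F t) atTop (𝓝 (2 ^ ρ)))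
    (hργ : ρ < γ) (hγ : 0 ≤ γ) :
    ∃ t₀ > 0, ∀ t ≥ t₀, ∀ c ≥ 1, F (c * t) ≤ 2 ^ γ * c ^ γ * F t := by
  obtain ⟨t₁, ht₁⟩ := eventually_atTop.1
    (hF2.eventually_lt_const (rpow_lt_rpow_of_exponent_lt one_lt_two hργ))
  refine ⟨max t₁ 1, by positivity, ?_⟩
  have hpos : ∀ t ≥ max t₁ 1, 0 < t := fun t ht => one_pos.trans_le ((le_max_right _ _).trans ht)
  have hdouble : ∀ t ≥ max t₁ 1, F (2 * t) ≤ 2 ^ γ * F t := fun t ht =>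
    ((div_lt_iff₀ (hFpos t (hpos t ht))).1 (ht₁ t ((le_max_left _ _).trans ht))).le
  have hsmall : ∀ t ≥ max t₁ 1, ∀ c ∈ Icc (1 : ℝ) 2, F (c * t) ≤ 2 ^ γ * c ^ γ * F t := by
    rintro t ht c ⟨hc1, hc2⟩
    have ht0 := hpos t ht
    calc F (c * t) ≤ F (2 * t) :=
          hFmono (by simp only [mem_Ioi]; positivity) (by simp only [mem_Ioi]; positivity)
            (by gcongr)
      _ ≤ 2 ^ γ * F t := hdouble t ht
      _ = 1 * (2 ^ γ * F t) := (one_mul _).symm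
      _ ≤ c ^ γ * (2 ^ γ * F t) := by
          have := hFpos t ht0
          gcongr
          exact one_le_rpow hc1 hγ
      _ = 2 ^ γ * c ^ γ * F t := by ring
  have hpow : ∀ n : ℕ, ∀ t ≥ max t₁ 1, ∀ c ∈ Icc (1 : ℝ) (2 ^ n),
      F (c * t) ≤ 2 ^ γ * c ^ γ * F t := by
    intro n
    induction n with
    | zero => exact fun t ht c hc => hsmall t ht c ⟨hc.1, by linarith [hc.2, pow_zero (2 : ℝ)]⟩
    | succ n ih =>
      rintro t ht c ⟨hc1, hcn⟩
      rcases le_or_gt c 2 with hc2 | hc2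
      · exact hsmall t ht c ⟨hc1, hc2⟩
      have ht0 := hpos t ht
      have hc' : c / 2 ∈ Icc (1 : ℝ) (2 ^ n) :=
        ⟨by linarith, by rw [pow_succ] at hcn; linarith⟩
      have hct : max t₁ 1 ≤ c / 2 * t := ht.trans (le_mul_of_one_le_left ht0.le hc'.1)
      calc F (c * t) = F (2 * (c / 2 * t)) := by ring_nf
        _ ≤ 2 ^ γ * F (c / 2 * t) := hdouble _ hct
        _ ≤ 2 ^ γ * (2 ^ γ * (c / 2) ^ γ * F t) := by gcongr; exact ih t ht _ hc'
        _ = 2 ^ γ * c ^ γ * F t := by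
            rw [div_rpow (by linarith) zero_le_two]
            field_simp
  intro t ht c hc
  obtain ⟨n, hn⟩ := pow_unbounded_of_one_lt c one_lt_two
  exact hpow n t ht c ⟨hc, hn.le⟩

theorem one_div_rpow_sq {u : ℝ} (hu : 0 < u) (ρ : ℝ) : ((1 / u) ^ ρ) ^ 2 = u ^ (-(2 * ρ)) := by
  rw [one_div, inv_rpow hu.le, ← rpow_neg hu.le, ← rpow_natCast, ← rpow_mul hu.le]
  ring_nf

theorem sq_div_le_rpow_add_one {F : ℝ → ℝ} {K γ t₀ t u : ℝ} (hFpos : ∀ t > 0, 0 < F t)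
    (hFmono : MonotoneOn F (Ioi 0)) (ht₀ : 0 < t₀)
    (hK : ∀ t ≥ t₀, ∀ c ≥ 1, F (c * t) ≤ K * c ^ γ * F t) (ht : t₀ ≤ t) (hu : 0 < u) :
    (F (t / u) / F t) ^ 2 ≤ K ^ 2 * u ^ (-(2 * γ)) + 1 := by
  have ht0 := ht₀.trans_le ht
  have hFt := hFpos t ht0
  have hratio0 : 0 ≤ F (t / u) / F t := div_nonneg (hFpos _ (by positivity)).le hFt.le
  rcases le_or_gt u 1 with hu1 | hu1
  · have hle : F (t / u) / F t ≤ K * (1 / u) ^ γ := by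
      rw [div_le_iff₀ hFt, ← one_div_mul_eq_div]
      exact hK t ht _ (one_le_one_div hu hu1)
    calc (F (t / u) / F t) ^ 2 ≤ (K * (1 / u) ^ γ) ^ 2 := by gcongr
      _ = K ^ 2 * u ^ (-(2 * γ)) := by rw [mul_pow, one_div_rpow_sq hu]
      _ ≤ K ^ 2 * u ^ (-(2 * γ)) + 1 := le_add_of_nonneg_right zero_le_one
  · have hle : F (t / u) / F t ≤ 1 := by
      rw [div_le_one hFt]
      exact hFmono (show 0 < t / u by positivity) ht0 (div_le_self ht0.le hu1.le)
    have : 0 ≤ K ^ 2 * u ^ (-(2 * γ)) := by positivity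
    nlinarith

theorem integrableOn_exp_neg_mul_add_rpow_neg {p : ℝ} (hp : p < 1) (P Q : ℝ) :
    IntegrableOn (fun u => exp (-u) * (P + Q * u ^ (-p))) (Ioi 0) := by
  have hGamma : IntegrableOn (fun u => exp (-u) * u ^ ((1 - p) - 1)) (Ioi 0) :=
    GammaIntegral_convergent (by linarith)
  have hexp : IntegrableOn (fun u => exp (-u)) (Ioi 0) := by
    simpa using exp_neg_integrableOn_Ioi 0 one_pos
  refine IntegrableOn.congr_fun ((hexp.const_mul P).add (hGamma.const_mul Q)) (fun u _ => ?_)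
    measurableSet_Ioi
  simp only [Pi.add_apply, sub_sub_cancel_left]
  ring

theorem integral_exp_neg_mul_one_div_rpow_sq {ρ : ℝ} (hρ : 2 * ρ < 1) (c : ℝ) :
    ∫ u in Ioi 0, exp (-u) * (c * ((1 / u) ^ ρ) ^ 2) = c * Gamma (1 - 2 * ρ) := by
  rw [Gamma_eq_integral (by linarith), ← integral_const_mul]
  refine setIntegral_congr_fun measurableSet_Ioi fun u (hu : 0 < u) => ?_
  rw [one_div_rpow_sq hu, show 1 - 2 * ρ - 1 = -(2 * ρ) by ring]
  ring

theorem tendsto_div_sq_of_tendsto_div_sq_one_div {F ν : ℝ → ℝ} {ρ c u : ℝ}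
    (hFpos : ∀ t > 0, 0 < F t)
    (hFreg : ∀ c > 0, Tendsto (fun t => F (c * t) / F t) atTop (𝓝 (c ^ ρ)))
    (hνlim : Tendsto (fun s => ν s / F (1 / s) ^ 2) (𝓝[>] 0) (𝓝 c)) (hu : 0 < u) :
    Tendsto (fun t => ν (u / t) / F t ^ 2) atTop (𝓝 (c * ((1 / u) ^ ρ) ^ 2)) := by
  have hs : Tendsto (fun t => u / t) atTop (𝓝[>] 0) :=
    tendsto_nhdsWithin_iff.2 ⟨tendsto_const_nhds.div_atTop tendsto_id,
      (eventually_gt_atTop 0).mono fun t ht => div_pos hu ht⟩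
  have hratio := hFreg (1 / u) (one_div_pos.2 hu)
  refine ((hνlim.comp hs).mul (hratio.pow 2)).congr' ?_
  filter_upwards [eventually_gt_atTop 0] with t ht
  have hFtu := (hFpos (1 / u * t) (by positivity)).ne'
  have hFt := (hFpos t ht).ne'
  rw [Function.comp_apply, one_div_div, one_div_mul_eq_div] at *
  field_simp

theorem tendsto_integral_exp_neg_mul_div_sq {F ν : ℝ → ℝ} {ρ c A B : ℝ} (hρ0 : 0 ≤ ρ)
    (hρ : 2 * ρ < 1) (hFpos : ∀ t > 0, 0 < F t) (hFmono : MonotoneOn F (Ioi 0))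
    (hFreg : ∀ c > 0, Tendsto (fun t => F (c * t) / F t) atTop (𝓝 (c ^ ρ)))
    (hνm : Measurable ν) (hν0 : ∀ s, 0 ≤ ν s) (hA : 0 ≤ A) (hB : 0 ≤ B)
    (hνle : ∀ s > 0, ν s ≤ A + B * F (1 / s) ^ 2)
    (hνlim : Tendsto (fun s => ν s / F (1 / s) ^ 2) (𝓝[>] 0) (𝓝 c)) :
    Tendsto (fun t => ∫ u in Ioi 0, exp (-u) * (ν (u / t) / F t ^ 2)) atTop
      (𝓝 (c * Gamma (1 - 2 * ρ))) := by
  obtain ⟨γ, hργ, hγ⟩ : ∃ γ, ρ < γ ∧ 2 * γ < 1 := ⟨(ρ + 1 / 2) / 2, by linarith, by linarith⟩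
  obtain ⟨t₀, ht₀, hpotter⟩ :=
    exists_potter_bound hFpos hFmono (hFreg 2 two_pos) hργ (by linarith)
  have hFt₀ := hFpos t₀ ht₀
  rw [← integral_exp_neg_mul_one_div_rpow_sq hρ]
  refine tendsto_integral_filter_of_dominated_convergence
    (fun u => exp (-u) * ((A / F t₀ ^ 2 + B) + B * (2 ^ γ) ^ 2 * u ^ (-(2 * γ)))) ?_ ?_
    (integrableOn_exp_neg_mul_add_rpow_neg (by linarith) _ _) ?_
  · exact .of_forall fun t => (by fun_prop : Measurable fun u => exp (-u)).mul
      ((hνm.comp (measurable_id.div_const t)).div_const _) |>.aestronglyMeasurable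
  · filter_upwards [eventually_ge_atTop t₀] with t ht
    refine (ae_restrict_iff' measurableSet_Ioi).2 (.of_forall fun u (hu : 0 < u) => ?_)
    have ht0 := ht₀.trans_le ht
    have hratio := sq_div_le_rpow_add_one hFpos hFmono ht₀ hpotter ht hu
    rw [norm_of_nonneg (by have := hν0 (u / t); positivity)]
    gcongr exp (-u) * ?_
    calc ν (u / t) / F t ^ 2 ≤ (A + B * F (t / u) ^ 2) / F t ^ 2 := by
          gcongr
          simpa only [one_div_div] using hνle (u / t) (by positivity)
      _ = A / F t ^ 2 + B * (F (t / u) / F t) ^ 2 := by ring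
      _ ≤ A / F t₀ ^ 2 + B * ((2 ^ γ) ^ 2 * u ^ (-(2 * γ)) + 1) := by
          gcongr
          exact hFmono ht₀ ht0 ht
      _ = (A / F t₀ ^ 2 + B) + B * (2 ^ γ) ^ 2 * u ^ (-(2 * γ)) := by ring
  · refine (ae_restrict_iff' measurableSet_Ioi).2 (.of_forall fun u (hu : 0 < u) => ?_)
    exact (tendsto_div_sq_of_tendsto_div_sq_one_div hFpos hFreg hνlim hu).const_mul _

theorem stmt_0_general
    (α : ℝ) (hα : 2 < α)
    (F : ℝ → ℝ)
    (hFpos : ∀ t > 0, 0 < F t)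
    (hFmono : StrictMonoOn F (Set.Ioi 0))
    (hFtop : Tendsto F atTop atTop)
    (hFreg : ∀ c > 0, Tendsto (fun t : ℝ => F (c * t) / F t) atTop (nhds (c ^ (1 / α))))
    (W : E2 → ℝ)
    (hWpos : ∀ x, 0 < W x)
    (hWint : Integrable W)
    (hWdecay : Tendsto (fun x : E2 => F (1 / W x) / ‖x‖)
      (comap (fun x : E2 => ‖x‖) atTop) (nhds 1)) :
    Tendsto (fun t : ℝ => (∫ x : E2, (1 - Real.exp (-(t * W x)))) / (F t) ^ 2)
      atTop (nhds (π * Real.Gamma ((α - 2) / α))) := by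
  obtain ⟨A, hA, hAle⟩ := exists_toReal_volume_setOf_lt_le hWdecay
  have hνle : ∀ s > 0, (volume {x | s < W x}).toReal ≤ A + 4 * π * F (1 / s) ^ 2 := fun s hs => by
    rw [setOf_lt_eq_setOf_comp_one_div_lt hFmono hWpos hs]
    exact hAle _ (hFpos _ (by positivity)).le
  have hlim := tendsto_integral_exp_neg_mul_div_sq (by positivity)
    (by rw [mul_one_div, div_lt_one (by linarith)]; exact hα) hFpos hFmono.monotoneOn hFreg
    measurable_toReal_measure_setOf_lt (fun _ => ENNReal.toReal_nonneg) hA (by positivity) hνle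
    (tendsto_toReal_volume_setOf_gt_div_sq hFmono hFtop hWpos hWdecay)
  rw [show (α - 2) / α = 1 - 2 * (1 / α) by field_simp]
  refine hlim.congr' ?_
  filter_upwards [eventually_gt_atTop 0] with t ht
  rw [integral_one_sub_exp_neg_mul hWint (fun x => (hWpos x).le) ht, ← integral_div]
  simp_rw [mul_div_assoc]

/-- Lemma: for `W` integrable with regular `(F,α)`-decay, `α ∈ (2,∞)`,
`lim_{t→∞} [F(t)]⁻² ∫ (1 - e^{-tW(x)}) dx = π Γ((α-2)/α)`. -/
theorem stmt_0
    (α : ℝ) (hα : 2 < α)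
    (F : ℝ → ℝ)
    (hFpos : ∀ t > 0, 0 < F t)
    (hFcont : ContinuousOn F (Set.Ioi 0))
    (hFmono : StrictMonoOn F (Set.Ioi 0))
    (hFtop : Tendsto F atTop atTop)
    (hFreg : ∀ c > 0, Tendsto (fun t : ℝ => F (c * t) / F t) atTop (nhds (c ^ (1 / α))))
    (W : E2 → ℝ)
    (hWpos : ∀ x, 0 < W x)
    (hWmeas : Measurable W)
    (hWint : Integrable W)
    (hWdecay : Tendsto (fun x : E2 => F (1 / W x) / ‖x‖)
      (comap (fun x : E2 => ‖x‖) atTop) (nhds 1)) :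
    Tendsto (fun t : ℝ => (∫ x : E2, (1 - Real.exp (-(t * W x)))) / (F t) ^ 2)
      atTop (nhds (π * Real.Gamma ((α - 2) / α))) :=
  stmt_0_general α hα F hFpos hFmono hFtop hFreg W hWpos hWint hWdecay
end
end

section
/- For every real α > 2, the Lebesgue integral over the plane of 1 minus the Gaussian cutoff of the power-law satisfies ∫_{ℝ²} (1 − exp(−|x|^{−α})) dx = π Γ((α−2)/α), where Γ denotes Euler's gamma function and |x| is the Euclidean norm of x ∈ ℝ². -/
/-!
Writing `1 - exp (-s) = ∫₀ˢ exp (-t) dt`, the layer-cake formula turns the integral into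
`∫₀^∞ μ {t ≤ ‖x‖ ^ (-α)} exp (-t) dt`. The superlevel set is a punctured ball of radius
`t ^ (-1/α)`, of measure `t ^ (-n/α) μ(B(0,1))` in dimension `n`, so what remains is Euler's
integral for `Γ (1 - n/α)`, convergent exactly when `α > n`. In the plane `μ(B(0,1)) = π`.
-/

open MeasureTheory Filter Real

noncomputable section

open Metric Module

theorem one_sub_exp_neg_eq_intervalIntegral (s : ℝ) :
    1 - exp (-s) = ∫ t in (0 : ℝ)..s, exp (-t) := by
  rw [intervalIntegral.integral_comp_neg (fun t => exp t), integral_exp, neg_zero, exp_zero]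

theorem lintegral_ofReal_one_sub_exp_neg {Ω : Type*} [MeasurableSpace Ω] (μ : Measure Ω)
    {f : Ω → ℝ} (hf_nn : 0 ≤ᵐ[μ] f) (hf : AEMeasurable f μ) :
    ∫⁻ ω, ENNReal.ofReal (1 - exp (-f ω)) ∂μ =
      ∫⁻ t in Set.Ioi 0, μ {ω | t ≤ f ω} * ENNReal.ofReal (exp (-t)) := by
  simp_rw [one_sub_exp_neg_eq_intervalIntegral]
  exact lintegral_comp_eq_lintegral_meas_le_mul μ hf_nn hf
    (fun t _ => (continuous_exp.comp continuous_neg).intervalIntegrable 0 t)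
    (Eventually.of_forall fun t => (exp_pos _).le)

theorem lintegral_exp_neg_mul_rpow_eq_Gamma {s : ℝ} (hs : 0 < s) :
    ∫⁻ t in Set.Ioi 0, ENNReal.ofReal (exp (-t) * t ^ (s - 1)) = ENNReal.ofReal (Gamma s) := by
  rw [← ofReal_integral_eq_lintegral_ofReal (GammaIntegral_convergent hs), Gamma_eq_integral hs]
  filter_upwards [ae_restrict_mem measurableSet_Ioi] with t (ht : 0 < t)
  positivity

theorem setOf_le_norm_rpow_neg_eq {E : Type*} [NormedAddCommGroup E] {α t : ℝ} (hα : 0 < α)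
    (ht : 0 < t) : {x : E | t ≤ ‖x‖ ^ (-α)} = closedBall 0 (t ^ (-α⁻¹)) \ {0} := by
  ext x
  simp only [Set.mem_ofPred_eq, Set.mem_sdiff, mem_closedBall, dist_zero_right,
    Set.mem_singleton_iff]
  rcases eq_or_ne x 0 with rfl | hx
  · simp [zero_rpow (neg_ne_zero.mpr hα.ne'), ht.not_ge]
  · rw [← le_rpow_inv_iff_of_neg (norm_pos_iff.mpr hx) ht (neg_neg_of_pos hα)]
    simp [hx]

section AddHaar

variable {E : Type*} [NormedAddCommGroup E] [NormedSpace ℝ E] [MeasurableSpace E] [BorelSpace E]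
  [FiniteDimensional ℝ E] [Nontrivial E] (μ : Measure E) [μ.IsAddHaarMeasure]

theorem addHaar_setOf_le_norm_rpow_neg {α t : ℝ} (hα : 0 < α) (ht : 0 < t) :
    μ {x | t ≤ ‖x‖ ^ (-α)} = ENNReal.ofReal (t ^ (-(finrank ℝ E / α))) * μ (ball 0 1) := by
  rw [setOf_le_norm_rpow_neg_eq hα ht, measure_sdiff_null (measure_singleton _),
    Measure.addHaar_closedBall μ _ (rpow_nonneg ht.le _), ← rpow_natCast, ← rpow_mul ht.le,
    neg_mul, inv_mul_eq_div]

theorem integral_one_sub_exp_neg_norm_rpow_neg {α : ℝ} (hα : finrank ℝ E < α) :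
    ∫ x, (1 - exp (-(‖x‖ ^ (-α)))) ∂μ = μ.real (ball 0 1) * Gamma (1 - finrank ℝ E / α) := by
  have hα₀ : 0 < α := lt_trans (Nat.cast_pos.mpr finrank_pos) hα
  have hs : 0 < 1 - finrank ℝ E / α := sub_pos.mpr ((div_lt_one hα₀).mpr hα)
  have h_nn : ∀ x : E, 0 ≤ 1 - exp (-(‖x‖ ^ (-α))) := fun x =>
    sub_nonneg.mpr (exp_le_one_iff.mpr (neg_nonpos.mpr (rpow_nonneg (norm_nonneg x) _)))
  have h_meas : Measurable fun x : E => ‖x‖ ^ (-α) := measurable_norm.pow_const _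
  have h_lintegral : ∫⁻ x, ENNReal.ofReal (1 - exp (-(‖x‖ ^ (-α)))) ∂μ =
      μ (ball 0 1) * ENNReal.ofReal (Gamma (1 - finrank ℝ E / α)) := by
    rw [lintegral_ofReal_one_sub_exp_neg μ
        (Eventually.of_forall fun x => rpow_nonneg (norm_nonneg x) _) h_meas.aemeasurable,
      ← lintegral_exp_neg_mul_rpow_eq_Gamma hs, ← lintegral_const_mul _ (by fun_prop)]
    refine setLIntegral_congr_fun measurableSet_Ioi fun t (ht : 0 < t) => ?_
    rw [addHaar_setOf_le_norm_rpow_neg μ hα₀ ht, sub_sub_cancel_left,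
      ENNReal.ofReal_mul (exp_pos _).le]
    ring
  rw [integral_eq_lintegral_of_nonneg_ae (Eventually.of_forall h_nn)
      (by fun_prop : Measurable _).aestronglyMeasurable, h_lintegral, ENNReal.toReal_mul,
    ENNReal.toReal_ofReal (Gamma_pos_of_pos hs).le, measureReal_def]

end AddHaar

/-- `∫_{ℝ²} (1 - exp(-|x|^{-α})) dx = π Γ((α-2)/α)` for `α > 2`. -/
theorem stmt_2 (α : ℝ) (hα : 2 < α) :
    ∫ x : E2, (1 - Real.exp (-(‖x‖ ^ (-α)))) = π * Real.Gamma ((α - 2) / α) := by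
  have h := integral_one_sub_exp_neg_norm_rpow_neg (volume : Measure E2)
    (α := α) (by simpa using hα)
  have hπ : (volume : Measure E2).real (ball 0 1) = π := by
    simp [measureReal_def, pi_nonneg]
  rwa [hπ, finrank_euclideanSpace_fin, Nat.cast_ofNat, one_sub_div (by positivity)] at h
end
end

section
/- Let α ∈ (2,∞) and let F : (0,∞) → (0,∞) be continuous, strictly increasing with lim_{t→∞} F(t) = ∞, and regularly varying of index 1/α. Let W : ℝ² → (0,∞) be measurable with regular (F,α)-decay. Then for every ξ ∈ ℝ² with ξ ≠ 0, lim_{t→∞} t · W(F(t) ξ) = |ξ|^{−α}. -/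
open MeasureTheory Filter Real

noncomputable section

/-!
Put `g t = 1 / W (F t • ξ)`. The decay hypothesis evaluated along `F t • ξ`, whose norm is
`F t * ‖ξ‖`, gives `F (g t) / F t → ‖ξ‖`. Since `F` is increasing and `F (c t) / F t → c ^ (1/α)`,
comparing `g t` with `c t` for `c` slightly above or below `‖ξ‖ ^ α` inverts this to
`g t / t → ‖ξ‖ ^ α`; the theorem is the reciprocal of that limit.
-/

namespace RegularVariation

variable {ι : Type*} {l : Filter ι} {α c L : ℝ} {F : ℝ → ℝ} {s g : ι → ℝ}

lemma eventually_lt_mul_of_tendsto_map_div (hFpos : ∀ t > 0, 0 < F t)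
    (hFmono : StrictMonoOn F (Set.Ioi 0)) (hc : 0 < c)
    (hFc : Tendsto (fun t => F (c * t) / F t) atTop (nhds (c ^ (1 / α))))
    (hs : Tendsto s l atTop) (hg : ∀ᶠ i in l, 0 < g i)
    (h : Tendsto (fun i => F (g i) / F (s i)) l (nhds L)) (hL : L < c ^ (1 / α)) :
    ∀ᶠ i in l, g i < c * s i := by
  filter_upwards [h.eventually_lt (hFc.comp hs) hL, hs.eventually_gt_atTop 0, hg]
    with i hlt hs0 hg0
  have hF : F (g i) < F (c * s i) := (div_lt_div_iff_of_pos_right (hFpos _ hs0)).mp hlt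
  exact (hFmono.lt_iff_lt hg0 (mul_pos hc hs0)).mp hF

lemma eventually_mul_lt_of_tendsto_map_div (hFpos : ∀ t > 0, 0 < F t)
    (hFmono : StrictMonoOn F (Set.Ioi 0)) (hc : 0 < c)
    (hFc : Tendsto (fun t => F (c * t) / F t) atTop (nhds (c ^ (1 / α))))
    (hs : Tendsto s l atTop) (hg : ∀ᶠ i in l, 0 < g i)
    (h : Tendsto (fun i => F (g i) / F (s i)) l (nhds L)) (hL : c ^ (1 / α) < L) :
    ∀ᶠ i in l, c * s i < g i := by
  filter_upwards [(hFc.comp hs).eventually_lt h hL, hs.eventually_gt_atTop 0, hg]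
    with i hlt hs0 hg0
  have hF : F (c * s i) < F (g i) := (div_lt_div_iff_of_pos_right (hFpos _ hs0)).mp hlt
  exact (hFmono.lt_iff_lt (mul_pos hc hs0) hg0).mp hF

theorem tendsto_div_of_tendsto_map_div (hα : 0 < α) (hFpos : ∀ t > 0, 0 < F t)
    (hFmono : StrictMonoOn F (Set.Ioi 0))
    (hFreg : ∀ c > 0, Tendsto (fun t => F (c * t) / F t) atTop (nhds (c ^ (1 / α))))
    (hs : Tendsto s l atTop) (hg : ∀ᶠ i in l, 0 < g i) (hL : 0 ≤ L)
    (h : Tendsto (fun i => F (g i) / F (s i)) l (nhds L)) :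
    Tendsto (fun i => g i / s i) l (nhds (L ^ α)) := by
  rw [tendsto_order]
  refine ⟨fun b hb => ?_, fun b hb => ?_⟩
  · rcases le_or_gt b 0 with hb0 | hb0
    · filter_upwards [hg, hs.eventually_gt_atTop 0] with i hg0 hs0
      exact hb0.trans_lt (div_pos hg0 hs0)
    · have hbL : b ^ (1 / α) < L := by
        rwa [one_div, rpow_inv_lt_iff_of_pos hb0.le hL hα]
      filter_upwards [eventually_mul_lt_of_tendsto_map_div hFpos hFmono hb0 (hFreg b hb0)
        hs hg h hbL, hs.eventually_gt_atTop 0] with i hlt hs0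
      rwa [lt_div_iff₀ hs0]
  · have hb0 : 0 < b := (rpow_nonneg hL α).trans_lt hb
    have hLb : L < b ^ (1 / α) := by
      rwa [one_div, lt_rpow_inv_iff_of_pos hL hb0.le hα]
    filter_upwards [eventually_lt_mul_of_tendsto_map_div hFpos hFmono hb0 (hFreg b hb0)
      hs hg h hLb, hs.eventually_gt_atTop 0] with i hlt hs0
    rwa [div_lt_iff₀ hs0]

end RegularVariation

lemma tendsto_map_one_div_smul_div_of_decay {ι E : Type*} [NormedAddCommGroup E]
    [NormedSpace ℝ E] {l : Filter ι} {F : ℝ → ℝ} {W : E → ℝ}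
    (hWdecay : Tendsto (fun x : E => F (1 / W x) / ‖x‖) (comap (fun x : E => ‖x‖) atTop)
      (nhds 1))
    {ξ : E} (hξ : ξ ≠ 0) {u : ι → ℝ} (hu : Tendsto u l atTop) :
    Tendsto (fun i => F (1 / W (u i • ξ)) / u i) l (nhds ‖ξ‖) := by
  have hn : 0 < ‖ξ‖ := norm_pos_iff.mpr hξ
  have hnorm : ∀ᶠ i in l, ‖u i • ξ‖ = u i * ‖ξ‖ := by
    filter_upwards [hu.eventually_gt_atTop 0] with i hi
    rw [norm_smul, norm_of_nonneg hi.le]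
  have hfar : Tendsto (fun i => u i • ξ) l (comap (fun x : E => ‖x‖) atTop) :=
    tendsto_comap_iff.mpr <| (hu.atTop_mul_const hn).congr' <| hnorm.mono fun _ h => h.symm
  have h := (hWdecay.comp hfar).mul_const ‖ξ‖
  rw [one_mul] at h
  refine h.congr' ?_
  filter_upwards [hnorm, hu.eventually_gt_atTop 0] with i hi hpos
  simp only [Function.comp_apply, hi]
  field_simp

theorem stmt_3_general
    (α : ℝ) (hα : 2 < α)
    (F : ℝ → ℝ)
    (hFpos : ∀ t > 0, 0 < F t)
    (hFmono : StrictMonoOn F (Set.Ioi 0))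
    (hFtop : Tendsto F atTop atTop)
    (hFreg : ∀ c > 0, Tendsto (fun t : ℝ => F (c * t) / F t) atTop (nhds (c ^ (1 / α))))
    (W : E2 → ℝ)
    (hWpos : ∀ x, 0 < W x)
    (hWdecay : Tendsto (fun x : E2 => F (1 / W x) / ‖x‖)
      (comap (fun x : E2 => ‖x‖) atTop) (nhds 1))
    (ξ : E2) (hξ : ξ ≠ 0) :
    Tendsto (fun t : ℝ => t * W (F t • ξ)) atTop (nhds (‖ξ‖ ^ (-α))) := by
  have hn : 0 < ‖ξ‖ := norm_pos_iff.mpr hξ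
  have hratio : Tendsto (fun t => (1 / W (F t • ξ)) / t) atTop (nhds (‖ξ‖ ^ α)) :=
    RegularVariation.tendsto_div_of_tendsto_map_div (by linarith) hFpos hFmono hFreg
      tendsto_id (.of_forall fun t => one_div_pos.mpr (hWpos _)) hn.le
      (tendsto_map_one_div_smul_div_of_decay hWdecay hξ hFtop)
  rw [rpow_neg hn.le]
  refine (hratio.inv₀ (rpow_pos_of_pos hn α).ne').congr fun t => ?_
  rw [inv_div, one_div, div_inv_eq_mul]

/-- For `W` with regular `(F,α)`-decay, `α ∈ (2,∞)`:
`lim_{t→∞} t · W(F(t)ξ) = |ξ|^{-α}` for each `ξ ≠ 0`. -/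
theorem stmt_3
    (α : ℝ) (hα : 2 < α)
    (F : ℝ → ℝ)
    (hFpos : ∀ t > 0, 0 < F t)
    (hFcont : ContinuousOn F (Set.Ioi 0))
    (hFmono : StrictMonoOn F (Set.Ioi 0))
    (hFtop : Tendsto F atTop atTop)
    (hFreg : ∀ c > 0, Tendsto (fun t : ℝ => F (c * t) / F t) atTop (nhds (c ^ (1 / α))))
    (W : E2 → ℝ)
    (hWpos : ∀ x, 0 < W x)
    (hWmeas : Measurable W)
    (hWdecay : Tendsto (fun x : E2 => F (1 / W x) / ‖x‖)
      (comap (fun x : E2 => ‖x‖) atTop) (nhds 1))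
    (ξ : E2) (hξ : ξ ≠ 0) :
    Tendsto (fun t : ℝ => t * W (F t • ξ)) atTop (nhds (‖ξ‖ ^ (-α))) :=
  stmt_3_general α hα F hFpos hFmono hFtop hFreg W hWpos hWdecay ξ hξ
end
end

section
/- Let α ∈ (2,∞) and let F : (0,∞) → (0,∞) be continuous, strictly increasing with lim_{t→∞} F(t) = ∞, regularly varying of index 1/α, and satisfy lim_{t→∞} F(t)/√(log t) = ∞. Let U : ℝ² → (0,∞) be measurable, Lebesgue integrable, and have regular (F,α)-decay. Then for every ℓ > 0 the Gaussian convolution |φ₀|² * U also has regular (F,α)-decay, i.e. lim_{|x|→∞} F(1/(|φ₀|² * U)(x))/|x| = 1. -/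
open MeasureTheory Filter Real

noncomputable section

/-- The centred Gaussian probability density `|φ₀(x)|² = (2πℓ²)⁻¹ exp(-|x|²/(2ℓ²))` on `ℝ²`. -/
def phiSq (l : ℝ) (x : E2) : ℝ := (2 * π * l ^ 2)⁻¹ * Real.exp (-‖x‖ ^ 2 / (2 * l ^ 2))

/-- The Gaussian convolution `(|φ₀|² * U)(x) = ∫ |φ₀(y)|² U(x-y) dy`. -/
def gaussConv (l : ℝ) (U : E2 → ℝ) (x : E2) : ℝ := ∫ y : E2, phiSq l y * U (x - y)

/-!
Regular variation means that multiplying `1 / U` by a constant `c` multiplies `F (1 / U)`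
asymptotically by `c ^ (1/α)`, so constant factors close to `1` cost only factors close to `1`.
From below, `(|φ₀|² * U)(x)` is at least the Gaussian mass of a fixed large ball `B(0, R)` times
the minimum of `U` on `x - B(0, R)`, and `F` of the reciprocal of that minimum is at most
`(1 + ε) (‖x‖ + R)`. From above, split at radius `ε ‖x‖`: on the ball `U (x - y) ≤ 1 / σ` where
`F σ = (1 - ε)² ‖x‖`, and off the ball the Gaussian is at most `exp (-(ε ‖x‖)² / (2ℓ²))`.
Sub-Gaussian growth of `F` gives `log σ ≤ (ε ‖x‖ / (2ℓ))²`, so this tail is at most `ε / σ`.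
-/

open Metric Set Topology

lemma tendsto_of_forall_eventually_bounds {ι : Type*} {l : Filter ι} {f : ι → ℝ}
    {g h : ℝ → ℝ} {a : ℝ} (hg : Tendsto g (𝓝[>] 0) (𝓝 a))
    (hh : Tendsto h (𝓝[>] 0) (𝓝 a))
    (hgh : ∀ᶠ ε in 𝓝[>] 0, ∀ᶠ x in l, g ε ≤ f x ∧ f x ≤ h ε) :
    Tendsto f l (𝓝 a) := by
  refine tendsto_order.2 ⟨fun b hb => ?_, fun b hb => ?_⟩
  · obtain ⟨ε, hbε, hε⟩ := ((hg.eventually (lt_mem_nhds hb)).and hgh).exists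
    exact hε.mono fun x hx => hbε.trans_le hx.1
  · obtain ⟨ε, hbε, hε⟩ := ((hh.eventually (gt_mem_nhds hb)).and hgh).exists
    exact hε.mono fun x hx => hx.2.trans_lt hbε

section RatioLimit

variable {ι : Type*} {l : Filter ι} {f g : ι → ℝ} {L k : ℝ}

lemma eventually_mul_lt_of_tendsto_div (h : Tendsto (fun x => f x / g x) l (𝓝 L))
    (hg : ∀ᶠ x in l, 0 < g x) (hk : k < L) : ∀ᶠ x in l, k * g x < f x := by
  filter_upwards [h.eventually (lt_mem_nhds hk), hg] with x hx hgx
  exact (lt_div_iff₀ hgx).1 hx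

lemma eventually_lt_mul_of_tendsto_div (h : Tendsto (fun x => f x / g x) l (𝓝 L))
    (hg : ∀ᶠ x in l, 0 < g x) (hk : L < k) : ∀ᶠ x in l, f x < k * g x := by
  filter_upwards [h.eventually (gt_mem_nhds hk), hg] with x hx hgx
  exact (div_lt_iff₀ hgx).1 hx

end RatioLimit

lemma exists_ge_apply_eq {F : ℝ → ℝ} (hcont : ContinuousOn F (Ioi 0))
    (htop : Tendsto F atTop atTop) {T s : ℝ} (hT : 0 < T) (hs : F T ≤ s) :
    ∃ t ≥ T, F t = s := by
  obtain ⟨T', hsT', hTT'⟩ := ((htop.eventually_ge_atTop s).and (eventually_ge_atTop T)).exists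
  obtain ⟨t, ht, hFt⟩ := intermediate_value_Icc hTT'
    (hcont.mono fun t ht => hT.trans_le ht.1) ⟨hs, hsT'⟩
  exact ⟨t, ht.1, hFt⟩

lemma le_sq_div_of_le_div_sqrt {a b K : ℝ} (hK : 0 < K) (h : K ≤ a / √b) : b ≤ (a / K) ^ 2 := by
  rcases le_or_gt b 0 with hb | hb
  · exact hb.trans (sq_nonneg _)
  · have hsqrt : √b ≤ a / K := by
      rw [le_div_iff₀ hK, mul_comm]
      exact (le_div_iff₀ (Real.sqrt_pos.2 hb)).1 h
    exact (Real.sqrt_le_left ((Real.sqrt_nonneg b).trans hsqrt)).1 hsqrt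

lemma eventually_forall_mem_ball_sub {E : Type*} [SeminormedAddCommGroup E] {p : E → Prop}
    (hp : ∀ᶠ z in comap (fun z : E => ‖z‖) atTop, p z) {ε : ℝ} (hε : ε < 1) (R : ℝ) :
    ∀ᶠ x in comap (fun x : E => ‖x‖) atTop, ∀ y ∈ ball 0 (ε * ‖x‖ + R), p (x - y) := by
  obtain ⟨M, -, hM⟩ := (atTop_basis.comap _).eventually_iff.1 hp
  filter_upwards [(tendsto_comap.const_mul_atTop (sub_pos.2 hε)).eventually_ge_atTop
    (M + R)] with x hx y hy
  refine hM (mem_preimage.2 (mem_Ici.2 ?_))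
  rw [mem_ball_zero_iff] at hy
  nlinarith [norm_sub_norm_le x y]

section Gaussian

variable {l : ℝ}

lemma phiSq_pos (hl : l ≠ 0) (y : E2) : 0 < phiSq l y := by
  unfold phiSq
  positivity

lemma phiSq_le_of_le_norm (l : ℝ) {r : ℝ} (hr : 0 ≤ r) {y : E2} (hy : r ≤ ‖y‖) :
    phiSq l y ≤ (2 * π * l ^ 2)⁻¹ * exp (-r ^ 2 / (2 * l ^ 2)) := by
  unfold phiSq
  gcongr

lemma continuous_phiSq (l : ℝ) : Continuous (phiSq l) := by
  unfold phiSq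
  fun_prop

lemma integral_phiSq (hl : l ≠ 0) : ∫ y, phiSq l y = 1 := by
  have hexp (y : E2) : exp (-‖y‖ ^ 2 / (2 * l ^ 2)) = exp (-(2 * l ^ 2)⁻¹ * ‖y‖ ^ 2) := by
    rw [neg_div, div_eq_inv_mul, neg_mul]
  simp_rw [phiSq, hexp]
  rw [integral_const_mul, GaussianFourier.integral_rexp_neg_mul_sq_norm (by positivity),
    finrank_euclideanSpace_fin]
  norm_num
  field_simp

lemma integrable_phiSq (hl : l ≠ 0) : Integrable (phiSq l) :=
  Integrable.of_integral_ne_zero (by simp [integral_phiSq hl])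

lemma tendsto_setIntegral_ball_phiSq (hl : l ≠ 0) :
    Tendsto (fun R => ∫ y in ball 0 R, phiSq l y) atTop (𝓝 1) :=
  integral_phiSq hl ▸ (aecover_ball tendsto_id).integral_tendsto_of_countably_generated
    (integrable_phiSq hl)

end Gaussian

section Convolution

variable {l : ℝ} {U : E2 → ℝ}

lemma integrable_phiSq_mul_sub (hl : l ≠ 0) (hU : Integrable U) (x : E2) :
    Integrable fun y => phiSq l y * U (x - y) := by
  refine (hU.comp_sub_left x).bdd_mul (continuous_phiSq l).aestronglyMeasurable
    (c := (2 * π * l ^ 2)⁻¹) (Eventually.of_forall fun y => ?_)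
  rw [Real.norm_of_nonneg (phiSq_pos hl y).le]
  simpa using phiSq_le_of_le_norm l le_rfl (norm_nonneg y)

lemma gaussConv_pos (hl : l ≠ 0) (hUpos : ∀ z, 0 < U z) (hU : Integrable U) (x : E2) :
    0 < gaussConv l U x := by
  refine (integral_pos_iff_support_of_nonneg (fun y => ?_)
    (integrable_phiSq_mul_sub hl hU x)).2 ?_
  · exact (mul_pos (phiSq_pos hl y) (hUpos _)).le
  · rw [Function.support_eq_univ fun y => (mul_pos (phiSq_pos hl y) (hUpos _)).ne']
    simp

lemma setIntegral_phiSq_mul_le_gaussConv (hl : l ≠ 0) (hU0 : ∀ z, 0 ≤ U z)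
    (hU : Integrable U) {x : E2} {R m : ℝ} (hm : ∀ y ∈ ball 0 R, m ≤ U (x - y)) :
    (∫ y in ball 0 R, phiSq l y) * m ≤ gaussConv l U x := by
  rw [← integral_mul_const]
  calc ∫ y in ball 0 R, phiSq l y * m
      ≤ ∫ y in ball 0 R, phiSq l y * U (x - y) :=
        setIntegral_mono_on ((integrable_phiSq hl).mul_const m).integrableOn
          (integrable_phiSq_mul_sub hl hU x).integrableOn measurableSet_ball
          fun y hy => mul_le_mul_of_nonneg_left (hm y hy) (phiSq_pos hl y).le
    _ ≤ gaussConv l U x :=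
        setIntegral_le_integral (integrable_phiSq_mul_sub hl hU x)
          (Eventually.of_forall fun y => mul_nonneg (phiSq_pos hl y).le (hU0 _))

lemma gaussConv_le (hl : l ≠ 0) (hU0 : ∀ z, 0 ≤ U z) (hU : Integrable U) {x : E2} {r m : ℝ}
    (hr : 0 ≤ r) (hm0 : 0 ≤ m) (hm : ∀ y ∈ ball 0 r, U (x - y) ≤ m) :
    gaussConv l U x ≤ m + (2 * π * l ^ 2)⁻¹ * exp (-r ^ 2 / (2 * l ^ 2)) * ∫ z, U z := by
  set C := (2 * π * l ^ 2)⁻¹ * exp (-r ^ 2 / (2 * l ^ 2))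
  have hint := integrable_phiSq_mul_sub hl hU x
  have hnear : ∫ y in ball 0 r, phiSq l y * U (x - y) ≤ m :=
    calc ∫ y in ball 0 r, phiSq l y * U (x - y)
        ≤ ∫ y in ball 0 r, phiSq l y * m :=
          setIntegral_mono_on hint.integrableOn
            ((integrable_phiSq hl).mul_const m).integrableOn measurableSet_ball
            fun y hy => mul_le_mul_of_nonneg_left (hm y hy) (phiSq_pos hl y).le
      _ = (∫ y in ball 0 r, phiSq l y) * m := integral_mul_const _ _
      _ ≤ (∫ y, phiSq l y) * m :=
          mul_le_mul_of_nonneg_right (setIntegral_le_integral (integrable_phiSq hl)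
            (Eventually.of_forall fun y => (phiSq_pos hl y).le)) hm0
      _ = m := by rw [integral_phiSq hl, one_mul]
  have hfar : ∫ y in (ball 0 r)ᶜ, phiSq l y * U (x - y) ≤ C * ∫ z, U z :=
    calc ∫ y in (ball 0 r)ᶜ, phiSq l y * U (x - y)
        ≤ ∫ y in (ball 0 r)ᶜ, C * U (x - y) := by
          refine setIntegral_mono_on hint.integrableOn
            ((hU.comp_sub_left x).const_mul C).integrableOn measurableSet_ball.compl
            fun y hy => mul_le_mul_of_nonneg_right ?_ (hU0 _)
          exact phiSq_le_of_le_norm l hr (by simpa using hy)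
      _ = C * ∫ y in (ball 0 r)ᶜ, U (x - y) := integral_const_mul _ _
      _ ≤ C * ∫ y, U (x - y) :=
          mul_le_mul_of_nonneg_left (setIntegral_le_integral (hU.comp_sub_left x)
            (Eventually.of_forall fun y => hU0 _)) (by positivity)
      _ = C * ∫ z, U z := by rw [integral_sub_left_eq_self]
  rw [gaussConv, ← integral_add_compl measurableSet_ball hint]
  exact add_le_add hnear hfar

end Convolution

def IsRegularlyVarying (F : ℝ → ℝ) (ρ : ℝ) : Prop :=
  ∀ c > 0, Tendsto (fun t => F (c * t) / F t) atTop (𝓝 (c ^ ρ))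

def HasRegularDecay (F : ℝ → ℝ) (U : E2 → ℝ) : Prop :=
  Tendsto (fun x : E2 => F (1 / U x) / ‖x‖) (comap (fun x : E2 => ‖x‖) atTop) (𝓝 1)

section Decay

variable {F : ℝ → ℝ} {U : E2 → ℝ} {ρ l ε : ℝ}

lemma eventually_gaussConv_le (hFmono : StrictMonoOn F (Ioi 0)) (hUpos : ∀ z, 0 < U z)
    (hU : Integrable U)
    (hUdecay : HasRegularDecay F U)
    (hl : l ≠ 0) (hε0 : 0 < ε) (hε1 : ε < 1) :
    ∀ᶠ x in comap (fun x : E2 => ‖x‖) atTop, ∀ σ > 0, F σ ≤ (1 - ε) ^ 2 * ‖x‖ →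
      log σ ≤ (ε * ‖x‖ / (2 * l)) ^ 2 → gaussConv l U x ≤ (1 + ε) / σ := by
  have hdecay := eventually_forall_mem_ball_sub (eventually_mul_lt_of_tendsto_div hUdecay
    (tendsto_comap.eventually_gt_atTop 0) (sub_lt_self 1 hε0)) hε1 0
  have htail : ∀ᶠ x in comap (fun x : E2 => ‖x‖) atTop,
      (2 * π * l ^ 2)⁻¹ * exp (-(ε * ‖x‖ / (2 * l)) ^ 2) * ∫ z, U z ≤ ε := by
    have hw : Tendsto (fun x : E2 => (ε * ‖x‖ / (2 * l)) ^ 2) (comap (fun x : E2 => ‖x‖) atTop)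
        atTop := by
      have hsq : (fun x : E2 => (ε * ‖x‖ / (2 * l)) ^ 2)
          = fun x => (ε / (2 * l)) ^ 2 * ‖x‖ ^ 2 := by
        ext; ring
      rw [hsq]
      exact ((tendsto_pow_atTop two_ne_zero).comp tendsto_comap).const_mul_atTop (by positivity)
    have := ((tendsto_exp_neg_atTop_nhds_zero.comp hw).const_mul (2 * π * l ^ 2)⁻¹).mul_const
      (∫ z, U z)
    rw [mul_zero, zero_mul] at this
    exact this.eventually (ge_mem_nhds hε0)
  filter_upwards [hdecay, htail] with x hx hxtail σ hσ hFσ hlog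
  have hball : ∀ y ∈ ball 0 (ε * ‖x‖), U (x - y) ≤ 1 / σ := by
    intro y hy
    have hxy := hx y (by simpa using hy)
    have hnorm : (1 - ε) * ‖x‖ ≤ ‖x - y‖ := by
      rw [mem_ball_zero_iff] at hy
      nlinarith [norm_sub_norm_le x y]
    have hF : F σ ≤ F (1 / U (x - y)) := by nlinarith
    rw [le_one_div (hUpos _) hσ]
    exact (hFmono.le_iff_le hσ (one_div_pos.2 (hUpos _))).1 hF
  have hexp : exp (-(ε * ‖x‖ / (2 * l)) ^ 2) ≤ 1 / σ := by
    rw [le_one_div (exp_pos _) hσ, one_div, ← exp_neg, neg_neg, ← log_le_iff_le_exp hσ]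
    exact hlog
  have hsplit : exp (-(ε * ‖x‖) ^ 2 / (2 * l ^ 2))
      = exp (-(ε * ‖x‖ / (2 * l)) ^ 2) * exp (-(ε * ‖x‖ / (2 * l)) ^ 2) := by
    rw [← exp_add]
    congr 1
    field_simp
    ring
  calc gaussConv l U x
      ≤ 1 / σ + (2 * π * l ^ 2)⁻¹ * exp (-(ε * ‖x‖) ^ 2 / (2 * l ^ 2)) * ∫ z, U z :=
        gaussConv_le hl (fun z => (hUpos z).le) hU (by positivity) (by positivity) hball
    _ = 1 / σ + (2 * π * l ^ 2)⁻¹ * exp (-(ε * ‖x‖ / (2 * l)) ^ 2) * (∫ z, U z) *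
          exp (-(ε * ‖x‖ / (2 * l)) ^ 2) := by rw [hsplit]; ring
    _ ≤ 1 / σ + ε * (1 / σ) := by gcongr
    _ = (1 + ε) / σ := by ring

lemma eventually_gaussConv_decay_le (hFcont : ContinuousOn F (Ioi 0))
    (hFmono : StrictMonoOn F (Ioi 0)) (hFtop : Tendsto F atTop atTop)
    (hFreg : IsRegularlyVarying F ρ)
    (hUpos : ∀ z, 0 < U z) (hU : Integrable U)
    (hUdecay : HasRegularDecay F U)
    (hl : l ≠ 0) (hε0 : 0 < ε) :
    ∀ᶠ x in comap (fun x : E2 => ‖x‖) atTop, F (1 / gaussConv l U x) / ‖x‖ ≤ (1 + ε) ^ 3 := by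
  have hI := tendsto_setIntegral_ball_phiSq hl
  have hIpow : Tendsto (fun R => (∫ y in ball 0 R, phiSq l y)⁻¹ ^ ρ) atTop (𝓝 1) := by
    simpa using (hI.inv₀ one_ne_zero).rpow_const (Or.inl (inv_ne_zero one_ne_zero))
  obtain ⟨R, hR0, hI0, hIε⟩ := ((eventually_ge_atTop 0).and
    ((hI.eventually (lt_mem_nhds one_pos)).and
      (hIpow.eventually (gt_mem_nhds (lt_add_of_pos_right 1 hε0))))).exists
  set I := ∫ y in ball 0 R, phiSq l y
  obtain ⟨T, hT⟩ := eventually_atTop.1 ((eventually_lt_mul_of_tendsto_div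
    (hFreg I⁻¹ (inv_pos.2 hI0)) (hFtop.eventually_gt_atTop 0) hIε).and (eventually_gt_atTop 0))
  have hT0 := (hT T le_rfl).2
  have hdecay := eventually_forall_mem_ball_sub (eventually_lt_mul_of_tendsto_div hUdecay
    (tendsto_comap.eventually_gt_atTop 0) (lt_add_of_pos_right 1 hε0)) zero_lt_one R
  filter_upwards [hdecay, tendsto_comap.eventually_ge_atTop (F T),
    tendsto_comap.eventually_ge_atTop (R / ε), tendsto_comap.eventually_gt_atTop 0]
    with x hx hxT hxR hx0
  obtain ⟨t, htT, hFt⟩ := exists_ge_apply_eq hFcont hFtop hT0 (s := (1 + ε) * (‖x‖ + R))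
    (by nlinarith)
  have ht0 := hT0.trans_le htT
  have hball : ∀ y ∈ ball 0 R, 1 / t ≤ U (x - y) := by
    intro y hy
    have hxy := hx y (by simpa using hy)
    have hnorm : ‖x - y‖ ≤ ‖x‖ + R :=
      (norm_sub_le x y).trans (by rw [mem_ball_zero_iff] at hy; linarith)
    have hF : F (1 / U (x - y)) ≤ F t := by rw [hFt]; nlinarith
    rw [one_div_le ht0 (hUpos _)]
    exact (hFmono.le_iff_le (one_div_pos.2 (hUpos _)) ht0).1 hF
  have hconv := gaussConv_pos hl hUpos hU x
  have hinv : 1 / gaussConv l U x ≤ I⁻¹ * t := by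
    rw [one_div_le hconv (by positivity)]
    calc 1 / (I⁻¹ * t) = I * (1 / t) := by field_simp
      _ ≤ gaussConv l U x := setIntegral_phiSq_mul_le_gaussConv hl (fun z => (hUpos z).le) hU hball
  have hR : R ≤ ε * ‖x‖ := by rwa [div_le_iff₀ hε0, mul_comm] at hxR
  rw [div_le_iff₀ hx0]
  calc F (1 / gaussConv l U x)
      ≤ F (I⁻¹ * t) := hFmono.monotoneOn (one_div_pos.2 hconv) (mul_pos (inv_pos.2 hI0) ht0) hinv
    _ ≤ (1 + ε) * F t := (hT t htT).1.le
    _ = (1 + ε) ^ 2 * (‖x‖ + R) := by rw [hFt]; ring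
    _ ≤ (1 + ε) ^ 2 * (‖x‖ + ε * ‖x‖) := by gcongr
    _ = (1 + ε) ^ 3 * ‖x‖ := by ring

lemma eventually_le_gaussConv_decay (hFcont : ContinuousOn F (Ioi 0))
    (hFmono : StrictMonoOn F (Ioi 0)) (hFtop : Tendsto F atTop atTop)
    (hFreg : IsRegularlyVarying F ρ)
    (hFsub : Tendsto (fun t => F t / √(log t)) atTop atTop)
    (hUpos : ∀ z, 0 < U z) (hU : Integrable U)
    (hUdecay : HasRegularDecay F U)
    (hl : 0 < l) (hε0 : 0 < ε) (hε1 : ε < 1) :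
    ∀ᶠ x in comap (fun x : E2 => ‖x‖) atTop,
      (1 - ε) ^ 3 * (1 + ε)⁻¹ ^ ρ ≤ F (1 / gaussConv l U x) / ‖x‖ := by
  set k := (1 + ε)⁻¹ ^ ρ
  have hk : 0 < k := rpow_pos_of_pos (by positivity) _
  obtain ⟨T, hT⟩ := eventually_atTop.1 (((hFsub.eventually_ge_atTop (2 * l / ε)).and
    (eventually_mul_lt_of_tendsto_div (hFreg (1 + ε)⁻¹ (by positivity))
      (hFtop.eventually_gt_atTop 0) (mul_lt_of_lt_one_left hk (sub_lt_self 1 hε0)))).and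
    (eventually_gt_atTop 0))
  have hT0 := (hT T le_rfl).2
  filter_upwards [eventually_gaussConv_le hFmono hUpos hU hUdecay hl.ne' hε0 hε1,
    tendsto_comap.eventually_ge_atTop (F T / (1 - ε) ^ 2), tendsto_comap.eventually_gt_atTop 0]
    with x hx hxT hx0
  obtain ⟨σ, hσT, hFσ⟩ := exists_ge_apply_eq hFcont hFtop hT0 (s := (1 - ε) ^ 2 * ‖x‖)
    (by rwa [div_le_iff₀ (by nlinarith), mul_comm] at hxT)
  have hσ0 := hT0.trans_le hσT
  have hlog : log σ ≤ (ε * ‖x‖ / (2 * l)) ^ 2 := by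
    refine (le_sq_div_of_le_div_sqrt (by positivity) (hT σ hσT).1.1).trans ?_
    have hFσK : F σ / (2 * l / ε) = (1 - ε) ^ 2 * (ε * ‖x‖ / (2 * l)) := by
      rw [hFσ]; field_simp
    rw [hFσK]
    gcongr
    exact mul_le_of_le_one_left (by positivity) (pow_le_one₀ (by linarith) (by linarith))
  have hconv := gaussConv_pos hl.ne' hUpos hU x
  have hinv : (1 + ε)⁻¹ * σ ≤ 1 / gaussConv l U x := by
    rw [le_one_div (by positivity) hconv]
    calc gaussConv l U x ≤ (1 + ε) / σ := hx σ hσ0 hFσ.le hlog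
      _ = 1 / ((1 + ε)⁻¹ * σ) := by field_simp
  rw [le_div_iff₀ hx0]
  calc (1 - ε) ^ 3 * k * ‖x‖ = (1 - ε) * k * F σ := by rw [hFσ]; ring
    _ ≤ F ((1 + ε)⁻¹ * σ) := (hT σ hσT).1.2.le
    _ ≤ F (1 / gaussConv l U x) :=
        hFmono.monotoneOn (mul_pos (by positivity) hσ0) (one_div_pos.2 hconv) hinv

end Decay

theorem stmt_5_general
    (α : ℝ)
    (F : ℝ → ℝ)
    (hFcont : ContinuousOn F (Set.Ioi 0))
    (hFmono : StrictMonoOn F (Set.Ioi 0))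
    (hFtop : Tendsto F atTop atTop)
    (hFreg : ∀ c > 0, Tendsto (fun t : ℝ => F (c * t) / F t) atTop (nhds (c ^ (1 / α))))
    (hFsub : Tendsto (fun t : ℝ => F t / Real.sqrt (Real.log t)) atTop atTop)
    (U : E2 → ℝ)
    (hUpos : ∀ x, 0 < U x)
    (hUint : Integrable U)
    (hUdecay : Tendsto (fun x : E2 => F (1 / U x) / ‖x‖)
      (comap (fun x : E2 => ‖x‖) atTop) (nhds 1))
    (l : ℝ) (hl : 0 < l) :
    Tendsto (fun x : E2 => F (1 / gaussConv l U x) / ‖x‖)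
      (comap (fun x : E2 => ‖x‖) atTop) (nhds 1) := by
  refine tendsto_of_forall_eventually_bounds (g := fun ε => (1 - ε) ^ 3 * (1 + ε)⁻¹ ^ (1 / α))
    (h := fun ε => (1 + ε) ^ 3) ?_ ?_ ?_
  · have : ContinuousAt (fun ε : ℝ => (1 - ε) ^ 3 * (1 + ε)⁻¹ ^ (1 / α)) 0 := by
      fun_prop (disch := norm_num)
    simpa using this.tendsto.mono_left nhdsWithin_le_nhds
  · have : ContinuousAt (fun ε : ℝ => (1 + ε) ^ 3) 0 := by fun_prop
    simpa using this.tendsto.mono_left nhdsWithin_le_nhds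
  · filter_upwards [Ioo_mem_nhdsGT one_pos] with ε ⟨hε0, hε1⟩
    exact (eventually_le_gaussConv_decay hFcont hFmono hFtop hFreg hFsub hUpos hUint hUdecay hl
      hε0 hε1).and
      (eventually_gaussConv_decay_le hFcont hFmono hFtop hFreg hUpos hUint hUdecay hl.ne' hε0)

/-- If `U` is integrable with sub-Gaussian, regular `(F,α)`-decay (`α ∈ (2,∞)`), then the
Gaussian convolution `|φ₀|² * U` has the same regular `(F,α)`-decay. -/
theorem stmt_5
    (α : ℝ) (hα : 2 < α)
    (F : ℝ → ℝ)
    (hFpos : ∀ t > 0, 0 < F t)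
    (hFcont : ContinuousOn F (Set.Ioi 0))
    (hFmono : StrictMonoOn F (Set.Ioi 0))
    (hFtop : Tendsto F atTop atTop)
    (hFreg : ∀ c > 0, Tendsto (fun t : ℝ => F (c * t) / F t) atTop (nhds (c ^ (1 / α))))
    (hFsub : Tendsto (fun t : ℝ => F t / Real.sqrt (Real.log t)) atTop atTop)
    (U : E2 → ℝ)
    (hUpos : ∀ x, 0 < U x)
    (hUmeas : Measurable U)
    (hUint : Integrable U)
    (hUdecay : Tendsto (fun x : E2 => F (1 / U x) / ‖x‖)
      (comap (fun x : E2 => ‖x‖) atTop) (nhds 1))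
    (l : ℝ) (hl : 0 < l) :
    Tendsto (fun x : E2 => F (1 / gaussConv l U x) / ‖x‖)
      (comap (fun x : E2 => ‖x‖) atTop) (nhds 1) :=
  stmt_5_general α F hFcont hFmono hFtop hFreg hFsub U hUpos hUint hUdecay l hl
end
end

section
/- Let η ∈ ℝ and let N : ℝ → ℝ be nondecreasing and right-continuous with N(E) = 0 for all E ≤ η and N not identically zero, with associated Lebesgue–Stieltjes measure μ_N and shifted Laplace–Stieltjes transform Ñ(t) := ∫_{(η,∞)} e^{−t(E−η)} dμ_N(E). Assume Ñ(τ) < ∞ for some τ > 0, and let (f, f#) be a de Bruijn conjugate pair of slowly varying functions. Then lim_{t→∞} f(t) · log Ñ(t) = −1 if and only if lim_{E↓0} (log N(η+E)) / f#(1/E) = −1. -/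
/-!
Write `M E = N (η + E)` and `L = Ñ`. Two elementary estimates tie them together: restricting the
integral to `(η, η + E]` gives `exp (-t E) M E ≤ L t`, and splitting it there gives
`L t ≤ M E + exp (-(t - τ) E) L τ`. Taking logarithms, the first with `t = c E⁻¹ f#(E⁻¹)` bounds
`log M E / f#(E⁻¹)` above by `c - 1 + o(1)`, and the second with `t = 3 E⁻¹ f#(E⁻¹)` bounds it below
by `-1 + o(1)`, because `f (c s f#(s)) f#(s) → 1`. The converse is symmetric, with
`E = (k t f(t))⁻¹`. The one analytic input about slowly varying functions is `t f(t) → ∞`, which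
follows from the uniform convergence theorem.
-/

open MeasureTheory Filter Real Set Topology

section UniformConvergence

variable {h : ℝ → ℝ}

theorem tendsto_volume_Icc_inter_le_abs_sub (hm : Measurable h)
    (hs : ∀ u, Tendsto (fun x => h (x + u) - h x) atTop (𝓝 0)) {ε : ℝ} (hε : 0 < ε)
    {y : ℕ → ℝ} (hy : Tendsto y atTop atTop) (a b : ℝ) :
    Tendsto (fun n => volume (Icc a b ∩ {v | ε ≤ |h (y n + v) - h (y n)|})) atTop (𝓝 0) := by
  have hmeas : ∀ n, MeasurableSet (Icc a b ∩ {v | ε ≤ |h (y n + v) - h (y n)|}) := fun n =>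
    measurableSet_Icc.inter <| measurableSet_le measurable_const <|
      ((hm.comp (measurable_const.add measurable_id)).sub measurable_const).abs
  have hlim : ∀ v, ∀ᶠ n in atTop,
      v ∈ Icc a b ∩ {v | ε ≤ |h (y n + v) - h (y n)|} ↔ v ∈ (∅ : Set ℝ) := by
    intro v
    filter_upwards [Metric.tendsto_nhds.1 ((hs v).comp hy) ε hε] with n hn
    simp only [Function.comp_apply, Real.dist_eq, sub_zero] at hn
    simp [hn]
  simpa using tendsto_measure_of_tendsto_indicator atTop hmeas measurableSet_Icc
    (by simp) (Eventually.of_forall fun _ => inter_subset_left) hlim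

/-- The uniform convergence theorem for measurable `h`. -/
theorem Measurable.eventually_forall_abs_add_sub_le (hm : Measurable h)
    (hs : ∀ u, Tendsto (fun x => h (x + u) - h x) atTop (𝓝 0)) {ε : ℝ} (hε : 0 < ε) :
    ∀ᶠ x in atTop, ∀ u ∈ Icc (0 : ℝ) 1, |h (x + u) - h x| ≤ ε := by
  by_contra hcon
  have hbad : ∀ n : ℕ, ∃ x : ℝ, (n : ℝ) ≤ x ∧ ∃ u ∈ Icc (0 : ℝ) 1, ε < |h (x + u) - h x| := by
    intro n
    obtain ⟨x, hx, hxn⟩ :=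
      ((not_eventually.1 hcon).and_eventually (eventually_ge_atTop (n : ℝ))).exists
    push Not at hx
    exact ⟨x, hxn, hx⟩
  choose x hx u hu hbig using hbad
  have hxtop : Tendsto x atTop atTop := tendsto_atTop_mono hx tendsto_natCast_atTop_atTop
  have hytop : Tendsto (fun n => x n + u n) atTop atTop :=
    tendsto_atTop_mono (fun n => le_add_of_nonneg_right (hu n).1) hxtop
  -- For `v ∈ [0, 2]`, `h (x n + v)` is `ε / 2`-far from `h (x n)` or from `h (x n + u n)`,
  -- and both bad sets of such `v` have small measure.
  set A := fun n => Icc (0 : ℝ) 2 ∩ {v | ε / 2 ≤ |h (x n + v) - h (x n)|}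
  set B := fun n => Icc (-1 : ℝ) 2 ∩ {v | ε / 2 ≤ |h (x n + u n + v) - h (x n + u n)|}
  have hcover : ∀ n, Icc (0 : ℝ) 2 ⊆ A n ∪ (fun v => v + -u n) ⁻¹' B n := by
    intro n v hv
    by_contra hvn
    simp only [mem_union, mem_preimage, A, B, mem_inter_iff, mem_ofPred_eq, not_or,
      not_and, not_le] at hvn
    have h1 := hvn.1 hv
    have h2 := hvn.2 ⟨by linarith [hv.1, (hu n).2], by linarith [hv.2, (hu n).1]⟩
    rw [show x n + u n + (v + -u n) = x n + v by ring] at h2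
    have := abs_sub_le (h (x n + u n)) (h (x n + v)) (h (x n))
    rw [abs_sub_comm (h (x n + u n)) (h (x n + v))] at this
    linarith [hbig n]
  have hle : ∀ n, volume (Icc (0 : ℝ) 2) ≤ volume (A n) + volume (B n) := fun n =>
    ((measure_mono (hcover n)).trans (measure_union_le _ _)).trans_eq
      (by rw [measure_preimage_add_right])
  have hsum : Tendsto (fun n => volume (A n) + volume (B n)) atTop (𝓝 0) := by
    simpa using (tendsto_volume_Icc_inter_le_abs_sub hm hs (half_pos hε) hxtop 0 2).add
      (tendsto_volume_Icc_inter_le_abs_sub hm hs (half_pos hε) hytop (-1) 2)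
  obtain ⟨n, hn⟩ :=
    (hsum.eventually_lt_const (by simp : (0 : ENNReal) < volume (Icc (0 : ℝ) 2))).exists
  exact (hle n).not_gt hn

theorem abs_sub_le_mul_of_forall_abs_add_sub_le {X ε : ℝ}
    (hX : ∀ x ≥ X, ∀ u ∈ Icc (0 : ℝ) 1, |h (x + u) - h x| ≤ ε) :
    ∀ x ≥ X, |h x - h X| ≤ ε * (x - X + 1) := by
  have hε : 0 ≤ ε := by simpa using hX X le_rfl 0 (by simp)
  have key : ∀ n : ℕ, ∀ x, X ≤ x → x ≤ X + n → |h x - h X| ≤ ε * n := by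
    intro n
    induction n with
    | zero => intro x h1 h2; simp [le_antisymm (by simpa using h2) h1]
    | succ n ih =>
      intro x h1 h2
      push_cast at h2 ⊢
      rcases le_or_gt x (X + 1) with hx | hx
      · have := hX X le_rfl (x - X) ⟨by linarith, by linarith⟩
        rw [add_sub_cancel] at this
        nlinarith [(Nat.cast_nonneg n : (0 : ℝ) ≤ n)]
      · have h3 := ih (x - 1) (by linarith) (by linarith)
        have h4 := hX (x - 1) (by linarith) 1 ⟨zero_le_one, le_rfl⟩
        rw [sub_add_cancel] at h4
        have := abs_sub_le (h x) (h (x - 1)) (h X)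
        linarith
  intro x hx
  have hceil := Nat.ceil_lt_add_one (sub_nonneg.2 hx)
  calc |h x - h X| ≤ ε * ⌈x - X⌉₊ := key _ x hx (by linarith [Nat.le_ceil (x - X)])
    _ ≤ ε * (x - X + 1) := by gcongr

end UniformConvergence

structure SlowlyVarying (f : ℝ → ℝ) : Prop where
  pos : ∀ t > 0, 0 < f t
  measurable : Measurable f
  tendsto_div : ∀ c > 0, Tendsto (fun t => f (c * t) / f t) atTop (𝓝 1)

namespace SlowlyVarying

variable {f g : ℝ → ℝ}

theorem tendsto_log_comp_exp_add_sub (hf : SlowlyVarying f) (u : ℝ) :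
    Tendsto (fun x => log (f (exp (x + u))) - log (f (exp x))) atTop (𝓝 0) := by
  have := ((continuousAt_log one_ne_zero).tendsto.comp
    ((hf.tendsto_div (exp u) (exp_pos u)).comp tendsto_exp_atTop))
  rw [log_one] at this
  refine this.congr fun x => ?_
  simp only [Function.comp_apply]
  rw [log_div (hf.pos _ (by positivity)).ne' (hf.pos _ (exp_pos x)).ne', ← exp_add, add_comm]

theorem tendsto_mul_atTop (hf : SlowlyVarying f) : Tendsto (fun t => t * f t) atTop atTop := by
  set h := fun x => log (f (exp x))
  have hm : Measurable h := measurable_log.comp (hf.measurable.comp measurable_exp)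
  obtain ⟨X, hX⟩ := eventually_atTop.1 <|
    hm.eventually_forall_abs_add_sub_le hf.tendsto_log_comp_exp_add_sub one_half_pos
  have hgrowth := abs_sub_le_mul_of_forall_abs_add_sub_le hX
  have hlin : Tendsto (fun x => x + h x) atTop atTop := by
    refine tendsto_atTop_mono' atTop ?_ <| tendsto_atTop_add_const_right _ (h X - (1 - X) / 2)
      (tendsto_id.atTop_mul_const one_half_pos)
    filter_upwards [eventually_ge_atTop X] with x hx
    have := (abs_le.1 (hgrowth x hx)).1
    simp only [id]
    linarith
  refine (tendsto_exp_atTop.comp (hlin.comp tendsto_log_atTop)).congr' ?_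
  filter_upwards [eventually_gt_atTop 0] with t ht
  simp only [Function.comp_apply, h, exp_add, exp_log ht, exp_log (hf.pos t ht)]

theorem tendsto_mul_comp_const_mul (hf : SlowlyVarying f)
    (hg : Tendsto (fun s => s * g s) atTop atTop)
    (hconj : Tendsto (fun s => g s * f (s * g s)) atTop (𝓝 1)) {k : ℝ} (hk : 0 < k) :
    Tendsto (fun s => g s * f (k * (s * g s))) atTop (𝓝 1) := by
  have := ((hf.tendsto_div k hk).comp hg).mul hconj
  rw [one_mul] at this
  refine this.congr' ?_
  filter_upwards [hg.eventually_gt_atTop 0] with s hs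
  have := (hf.pos _ hs).ne'
  simp only [Function.comp_apply]
  field_simp

end SlowlyVarying

theorem tendsto_atTop_of_conj_of_tendsto_zero {f g : ℝ → ℝ} (hf : ∀ t > 0, 0 < f t)
    (hg : Tendsto (fun s => s * g s) atTop atTop)
    (hconj : Tendsto (fun s => g s * f (s * g s)) atTop (𝓝 1))
    (hf0 : Tendsto f atTop (𝓝 0)) : Tendsto g atTop atTop := by
  have hf0' : Tendsto (fun s => f (s * g s)) atTop (𝓝[>] 0) :=
    tendsto_nhdsWithin_of_tendsto_nhds_of_eventually_within _ (hf0.comp hg)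
      (by filter_upwards [hg.eventually_gt_atTop 0] with s hs using hf _ hs)
  refine (hconj.pos_mul_atTop one_pos hf0'.inv_tendsto_nhdsGT_zero).congr' ?_
  filter_upwards [hg.eventually_gt_atTop 0] with s hs
  simp only [Pi.inv_apply]
  exact mul_inv_cancel_right₀ (hf _ hs).ne' _

theorem tendsto_zero_of_conj_of_tendsto_atTop {f g : ℝ → ℝ}
    (hf : Tendsto (fun t => t * f t) atTop atTop)
    (hconj : Tendsto (fun t => f t * g (t * f t)) atTop (𝓝 1))
    (hg : Tendsto g atTop atTop) : Tendsto f atTop (𝓝 0) := by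
  refine (hconj.div_atTop (hg.comp hf)).congr' ?_
  filter_upwards [(hg.comp hf).eventually_gt_atTop 0] with t ht
  simp only [Function.comp_apply] at ht ⊢
  exact mul_div_cancel_right₀ _ ht.ne'

theorem tendsto_nhds_of_eventually_bounds {α : Type*} {l : Filter α} {g : α → ℝ} {b : ℝ}
    (hlo : ∀ c > 0, ∀ᶠ x in l, b - c ≤ g x) (hup : ∀ c > 0, ∀ᶠ x in l, g x ≤ b + c) :
    Tendsto g l (𝓝 b) :=
  tendsto_order.2
    ⟨fun a ha => (hlo ((b - a) / 2) (by linarith)).mono fun x hx => by linarith,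
      fun a ha => (hup ((a - b) / 2) (by linarith)).mono fun x hx => by linarith⟩

theorem tendsto_exp_neg_sub_mul (τ : ℝ) {E : ℝ} (hE : 0 < E) (C : ℝ) :
    Tendsto (fun t => exp (-(t - τ) * E) * C) atTop (𝓝 0) := by
  have : Tendsto (fun t => -(t - τ) * E) atTop atBot :=
    ((tendsto_atTop_add_const_right atTop (-τ) tendsto_id).atTop_mul_const_of_neg
      (neg_neg_of_pos hE)).congr fun t => by simp only [id]; ring
  simpa using (tendsto_exp_atBot.comp this).mul_const C

structure LaplaceBounds (M L : ℝ → ℝ) (τ : ℝ) : Prop where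
  nonneg : ∀ E > 0, 0 ≤ M E
  tendsto_nhdsGT : Tendsto M (𝓝[>] 0) (𝓝 0)
  pos : ∀ t ≥ τ, 0 < L t
  exp_mul_le : ∀ t ≥ τ, ∀ E > 0, exp (-t * E) * M E ≤ L t
  le_add_exp_mul : ∀ t ≥ τ, ∀ E > 0, L t ≤ M E + exp (-(t - τ) * E) * L τ

namespace LaplaceBounds

variable {M L f fs : ℝ → ℝ} {τ : ℝ}

theorem tendsto_zero (hB : LaplaceBounds M L τ) : Tendsto L atTop (𝓝 0) := by
  refine tendsto_order.2 ⟨fun a ha => ?_, fun a ha => ?_⟩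
  · filter_upwards [eventually_ge_atTop τ] with t ht using ha.trans (hB.pos t ht)
  obtain ⟨E, hME, hE⟩ :=
    ((hB.tendsto_nhdsGT.eventually_lt_const (half_pos ha)).and self_mem_nhdsWithin).exists
  filter_upwards [eventually_ge_atTop τ,
    (tendsto_exp_neg_sub_mul τ hE (L τ)).eventually_lt_const (half_pos ha)] with t ht hexp
  linarith [hB.le_add_exp_mul t ht E hE]

theorem tendsto_log_atBot (hB : LaplaceBounds M L τ) :
    Tendsto (fun t => log (L t)) atTop atBot :=
  tendsto_log_nhdsGT_zero.comp <| tendsto_nhdsWithin_of_tendsto_nhds_of_eventually_within _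
    hB.tendsto_zero (by filter_upwards [eventually_ge_atTop τ] with t ht using hB.pos t ht)

theorem log_le_add_log (hB : LaplaceBounds M L τ) {t E : ℝ} (ht : τ ≤ t) (hE : 0 < E)
    (hM : 0 < M E) : log (M E) ≤ t * E + log (L t) := by
  have := log_le_log (by positivity) (hB.exp_mul_le t ht E hE)
  rw [log_mul (exp_pos _).ne' hM.ne', log_exp] at this
  linarith

theorem log_le_log_two_add_max (hB : LaplaceBounds M L τ) {t E : ℝ} (ht : τ ≤ t) (hE : 0 < E)
    (hM : 0 < M E) : log (L t) ≤ log 2 + max (log (M E)) (-(t - τ) * E + log (L τ)) := by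
  have hsum := hB.le_add_exp_mul t ht E hE
  have htail : 0 < exp (-(t - τ) * E) * L τ := mul_pos (exp_pos _) (hB.pos τ le_rfl)
  rw [← log_exp (-(t - τ) * E), ← log_mul (exp_pos _).ne' (hB.pos τ le_rfl).ne']
  rcases le_total (M E) (exp (-(t - τ) * E) * L τ) with h | h
  · rw [max_eq_right (log_le_log hM h), ← log_mul two_ne_zero htail.ne']
    exact log_le_log (hB.pos t ht) (by linarith)
  · rw [max_eq_left (log_le_log htail h), ← log_mul two_ne_zero hM.ne']
    exact log_le_log (hB.pos t ht) (by linarith)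

theorem tendsto_zero_of_tendsto_mul_log (hB : LaplaceBounds M L τ)
    (hQ : Tendsto (fun t => f t * log (L t)) atTop (𝓝 (-1))) : Tendsto f atTop (𝓝 0) := by
  refine (hQ.div_atBot hB.tendsto_log_atBot).congr' ?_
  filter_upwards [hB.tendsto_log_atBot.eventually_lt_atBot 0] with t ht
  exact mul_div_cancel_right₀ _ ht.ne

/-- If `M E = 0`, then `L t` decays like `exp (-t E)`, which is too fast. -/
theorem pos_of_tendsto_mul_log (hB : LaplaceBounds M L τ) (hf : SlowlyVarying f)
    (hQ : Tendsto (fun t => f t * log (L t)) atTop (𝓝 (-1))) {E : ℝ} (hE : 0 < E) :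
    0 < M E := by
  refine (hB.nonneg E hE).lt_of_ne' fun hME => ?_
  have hbound : ∀ᶠ t in atTop,
      f t * log (L t) ≤ -E * (t * f t) + f t * (τ * E + log (L τ)) := by
    filter_upwards [eventually_ge_atTop τ, eventually_gt_atTop 0] with t ht ht0
    have hL := hB.le_add_exp_mul t ht E hE
    rw [hME, zero_add] at hL
    have := log_le_log (hB.pos t ht) hL
    rw [log_mul (exp_pos _).ne' (hB.pos τ le_rfl).ne', log_exp] at this
    nlinarith [hf.pos t ht0]
  have hbot : Tendsto (fun t => -E * (t * f t) + f t * (τ * E + log (L τ))) atTop atBot :=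
    (hf.tendsto_mul_atTop.const_mul_atTop_of_neg (neg_neg_of_pos hE)).atBot_add
      ((hB.tendsto_zero_of_tendsto_mul_log hQ).mul_const _)
  exact not_tendsto_nhds_of_tendsto_atBot (tendsto_atBot_mono' atTop hbound hbot) (-1) hQ

theorem tendsto_log_comp_div (hf : SlowlyVarying f) (hfs : SlowlyVarying fs)
    (hconj : Tendsto (fun s => fs s * f (s * fs s)) atTop (𝓝 1))
    (hQ : Tendsto (fun t => f t * log (L t)) atTop (𝓝 (-1))) {k : ℝ} (hk : 0 < k) :
    Tendsto (fun s => log (L (k * (s * fs s))) / fs s) atTop (𝓝 (-1)) := by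
  have ht := hfs.tendsto_mul_atTop.const_mul_atTop hk
  have := (hQ.comp ht).div (hf.tendsto_mul_comp_const_mul hfs.tendsto_mul_atTop hconj hk)
    one_ne_zero
  rw [div_one] at this
  refine this.congr' ?_
  filter_upwards [ht.eventually_gt_atTop 0] with s hs
  simp only [Pi.div_apply, Function.comp_apply]
  rw [mul_comm (fs s), mul_div_mul_left _ _ (hf.pos _ hs).ne']

theorem eventually_log_div_le (hB : LaplaceBounds M L τ) (hf : SlowlyVarying f)
    (hfs : SlowlyVarying fs) (hconj : Tendsto (fun s => fs s * f (s * fs s)) atTop (𝓝 1))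
    (hQ : Tendsto (fun t => f t * log (L t)) atTop (𝓝 (-1))) {c : ℝ} (hc : 0 < c) :
    ∀ᶠ s in atTop, log (M s⁻¹) / fs s ≤ -1 + c := by
  have ht := hfs.tendsto_mul_atTop.const_mul_atTop (half_pos hc)
  filter_upwards [eventually_gt_atTop 0, ht.eventually_ge_atTop τ,
    (tendsto_log_comp_div hf hfs hconj hQ (half_pos hc)).eventually_le_const
      (by linarith : (-1 : ℝ) < -1 + c / 2)] with s hs hts hq
  have hlog := hB.log_le_add_log hts (inv_pos.2 hs)
    (hB.pos_of_tendsto_mul_log hf hQ (inv_pos.2 hs))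
  have hfs_pos := hfs.pos s hs
  calc log (M s⁻¹) / fs s
      ≤ (c / 2 * (s * fs s) * s⁻¹ + log (L (c / 2 * (s * fs s)))) / fs s := by gcongr
    _ = c / 2 + log (L (c / 2 * (s * fs s))) / fs s := by field_simp
    _ ≤ -1 + c := by linarith

theorem eventually_le_log_div (hB : LaplaceBounds M L τ) (hf : SlowlyVarying f)
    (hfs : SlowlyVarying fs) (hconj : Tendsto (fun s => fs s * f (s * fs s)) atTop (𝓝 1))
    (hQ : Tendsto (fun t => f t * log (L t)) atTop (𝓝 (-1))) {c : ℝ} (hc : 0 < c) :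
    ∀ᶠ s in atTop, -1 - c ≤ log (M s⁻¹) / fs s := by
  have hfs_top : Tendsto fs atTop atTop := tendsto_atTop_of_conj_of_tendsto_zero hf.pos
    hfs.tendsto_mul_atTop hconj (hB.tendsto_zero_of_tendsto_mul_log hQ)
  have ht := hfs.tendsto_mul_atTop.const_mul_atTop three_pos
  have hq := tendsto_log_comp_div hf hfs hconj hQ three_pos
  have hτs : Tendsto (fun s : ℝ => τ * s⁻¹) atTop (𝓝 0) := by
    simpa using tendsto_inv_atTop_zero.const_mul τ
  filter_upwards [eventually_gt_atTop 0, ht.eventually_ge_atTop τ,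
    hq.eventually_const_le (by linarith : (-1 - c / 2 : ℝ) < -1),
    hq.eventually_const_lt (by norm_num : (-2 : ℝ) < -1), hτs.eventually_lt_const one_pos,
    hfs_top.eventually_ge_atTop (2 * log 2 / c),
    hfs_top.eventually_gt_atTop (log 2 + 1 + log (L τ))] with s hs hts hq1 hq2 hτs hA1 hA2
  set A := fs s
  set t := 3 * (s * A)
  have hA : 0 < A := hfs.pos s hs
  have hmax := hB.log_le_log_two_add_max hts (inv_pos.2 hs)
    (hB.pos_of_tendsto_mul_log hf hQ (inv_pos.2 hs))
  have htail : -(t - τ) * s⁻¹ = -3 * A + τ * s⁻¹ := by field_simp; ring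
  have hlogL : log (L t) = A * (log (L t) / A) := by field_simp
  -- Since `A → ∞` and `log (L t) / A → -1`, the tail term cannot realize the maximum.
  have hM : log (L t) - log 2 ≤ log (M s⁻¹) := by
    rcases le_max_iff.1 (show log (L t) - log 2 ≤ _ by linarith) with h | h
    · exact h
    · nlinarith
  rw [le_div_iff₀ hA]
  rw [div_le_iff₀ hc] at hA1
  nlinarith

theorem tendsto_log_div_of_tendsto_mul_log (hB : LaplaceBounds M L τ) (hf : SlowlyVarying f)
    (hfs : SlowlyVarying fs) (hconj : Tendsto (fun s => fs s * f (s * fs s)) atTop (𝓝 1))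
    (hQ : Tendsto (fun t => f t * log (L t)) atTop (𝓝 (-1))) :
    Tendsto (fun s => log (M s⁻¹) / fs s) atTop (𝓝 (-1)) :=
  tendsto_nhds_of_eventually_bounds (fun _ hc => hB.eventually_le_log_div hf hfs hconj hQ hc)
    (fun _ hc => hB.eventually_log_div_le hf hfs hconj hQ hc)

theorem eventually_pos_of_tendsto_log_div (hB : LaplaceBounds M L τ)
    (hR : Tendsto (fun s => log (M s⁻¹) / fs s) atTop (𝓝 (-1))) :
    ∀ᶠ s in atTop, 0 < M s⁻¹ := by
  filter_upwards [hR.eventually_lt_const (by norm_num : (-1 : ℝ) < 0), eventually_gt_atTop 0]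
    with s hRs hs
  refine (hB.nonneg _ (inv_pos.2 hs)).lt_of_ne' fun hM => ?_
  rw [hM, log_zero, zero_div] at hRs
  exact hRs.false

theorem tendsto_atTop_of_tendsto_log_div (hB : LaplaceBounds M L τ)
    (hR : Tendsto (fun s => log (M s⁻¹) / fs s) atTop (𝓝 (-1))) : Tendsto fs atTop atTop := by
  have hlog : Tendsto (fun s => log (M s⁻¹)) atTop atBot :=
    tendsto_log_nhdsGT_zero.comp <| tendsto_nhdsWithin_of_tendsto_nhds_of_eventually_within _
      (hB.tendsto_nhdsGT.comp tendsto_inv_atTop_nhdsGT_zero)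
      (hB.eventually_pos_of_tendsto_log_div hR)
  refine (hlog.atBot_mul_neg (by norm_num) (hR.inv₀ (by norm_num))).congr' ?_
  filter_upwards [hlog.eventually_lt_atBot 0] with s hs
  simp only [inv_div]
  exact mul_div_cancel₀ _ hs.ne

theorem tendsto_mul_log_comp (hf : SlowlyVarying f) (hfs : SlowlyVarying fs)
    (hconj : Tendsto (fun t => f t * fs (t * f t)) atTop (𝓝 1))
    (hR : Tendsto (fun s => log (M s⁻¹) / fs s) atTop (𝓝 (-1))) {k : ℝ} (hk : 0 < k) :
    Tendsto (fun t => f t * log (M (k * (t * f t))⁻¹)) atTop (𝓝 (-1)) := by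
  have ht := hf.tendsto_mul_atTop.const_mul_atTop hk
  have := (hR.comp ht).mul (hfs.tendsto_mul_comp_const_mul hf.tendsto_mul_atTop hconj hk)
  rw [mul_one] at this
  refine this.congr' ?_
  filter_upwards [ht.eventually_gt_atTop 0] with t ht
  simp only [Function.comp_apply]
  rw [div_mul_comm, mul_div_cancel_right₀ _ (hfs.pos _ ht).ne']

theorem eventually_le_mul_log (hB : LaplaceBounds M L τ) (hf : SlowlyVarying f)
    (hfs : SlowlyVarying fs) (hconj : Tendsto (fun t => f t * fs (t * f t)) atTop (𝓝 1))
    (hR : Tendsto (fun s => log (M s⁻¹) / fs s) atTop (𝓝 (-1))) {c : ℝ} (hc : 0 < c) :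
    ∀ᶠ t in atTop, -1 - c ≤ f t * log (L t) := by
  have hk : 0 < 2 / c := by positivity
  have ht := hf.tendsto_mul_atTop.const_mul_atTop hk
  filter_upwards [eventually_ge_atTop τ, eventually_gt_atTop 0, ht.eventually_gt_atTop 0,
    ht.eventually (hB.eventually_pos_of_tendsto_log_div hR),
    (tendsto_mul_log_comp hf hfs hconj hR hk).eventually_const_le
      (by linarith : (-1 - c / 2 : ℝ) < -1)] with t htτ ht0 hu hM hp
  have hft := hf.pos t ht0
  have hlog := mul_le_mul_of_nonneg_left
    (hB.log_le_add_log htτ (inv_pos.2 hu) hM)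
    hft.le
  rw [mul_add, show f t * (t * (2 / c * (t * f t))⁻¹) = c / 2 by field_simp] at hlog
  linarith

theorem eventually_mul_log_le (hB : LaplaceBounds M L τ) (hf : SlowlyVarying f)
    (hfs : SlowlyVarying fs) (hconj : Tendsto (fun t => f t * fs (t * f t)) atTop (𝓝 1))
    (hR : Tendsto (fun s => log (M s⁻¹) / fs s) atTop (𝓝 (-1))) {c : ℝ} (hc : 0 < c) :
    ∀ᶠ t in atTop, f t * log (L t) ≤ -1 + c := by
  have hf0 : Tendsto f atTop (𝓝 0) := tendsto_zero_of_conj_of_tendsto_atTop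
    hf.tendsto_mul_atTop hconj (hB.tendsto_atTop_of_tendsto_log_div hR)
  have ht := hf.tendsto_mul_atTop.const_mul_atTop (inv_pos.2 three_pos)
  have hbound : Tendsto (fun t => f t * log 2 + max (f t * log (M (3⁻¹ * (t * f t))⁻¹))
      (-3 + 3 * τ * t⁻¹ + f t * log (L τ))) atTop (𝓝 (-1)) := by
    have := (hf0.mul_const (log 2)).add ((tendsto_mul_log_comp hf hfs hconj hR
      (inv_pos.2 three_pos)).max (((tendsto_inv_atTop_zero.const_mul (3 * τ)).const_add (-3)).add
        (hf0.mul_const (log (L τ)))))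
    rwa [show 0 * log 2 + max (-1) (-3 + 3 * τ * 0 + 0 * log (L τ)) = (-1 : ℝ) by norm_num]
      at this
  filter_upwards [eventually_ge_atTop τ, eventually_gt_atTop 0, ht.eventually_gt_atTop 0,
    ht.eventually (hB.eventually_pos_of_tendsto_log_div hR),
    hbound.eventually_le_const (by linarith : (-1 : ℝ) < -1 + c)] with t htτ ht0 hu hM hr
  have hft := hf.pos t ht0
  have hlog := mul_le_mul_of_nonneg_left
    (hB.log_le_log_two_add_max htτ (inv_pos.2 hu) hM)
    hft.le
  rw [mul_add, mul_max_of_nonneg _ _ hft.le,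
    show f t * (-(t - τ) * (3⁻¹ * (t * f t))⁻¹ + log (L τ))
      = -3 + 3 * τ * t⁻¹ + f t * log (L τ) by field_simp; ring] at hlog
  linarith

theorem tendsto_mul_log_of_tendsto_log_div (hB : LaplaceBounds M L τ) (hf : SlowlyVarying f)
    (hfs : SlowlyVarying fs) (hconj : Tendsto (fun t => f t * fs (t * f t)) atTop (𝓝 1))
    (hR : Tendsto (fun s => log (M s⁻¹) / fs s) atTop (𝓝 (-1))) :
    Tendsto (fun t => f t * log (L t)) atTop (𝓝 (-1)) :=
  tendsto_nhds_of_eventually_bounds (fun _ hc => hB.eventually_le_mul_log hf hfs hconj hR hc)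
    (fun _ hc => hB.eventually_mul_log_le hf hfs hconj hR hc)

theorem tendsto_mul_log_iff (hB : LaplaceBounds M L τ) (hf : SlowlyVarying f)
    (hfs : SlowlyVarying fs) (hconj₁ : Tendsto (fun t => f t * fs (t * f t)) atTop (𝓝 1))
    (hconj₂ : Tendsto (fun s => fs s * f (s * fs s)) atTop (𝓝 1)) :
    Tendsto (fun t => f t * log (L t)) atTop (𝓝 (-1)) ↔
      Tendsto (fun E => log (M E) / fs (1 / E)) (𝓝[>] 0) (𝓝 (-1)) := by
  rw [← inv_atTop₀, ← Filter.map_inv, tendsto_map'_iff]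
  simp only [Function.comp_def, one_div, inv_inv]
  exact ⟨hB.tendsto_log_div_of_tendsto_mul_log hf hfs hconj₂,
    hB.tendsto_mul_log_of_tendsto_log_div hf hfs hconj₁⟩

end LaplaceBounds

namespace StieltjesFunction

variable {η τ t E : ℝ} {N : StieltjesFunction ℝ}

noncomputable def shiftedLaplace (N : StieltjesFunction ℝ) (η t : ℝ) : ℝ :=
  ∫ E in Ioi η, exp (-t * (E - η)) ∂N.measure

theorem integrableOn_exp_neg_mul_sub
    (hfin : ∫⁻ E in Ioi η, ENNReal.ofReal (exp (-τ * (E - η))) ∂N.measure < ⊤) (ht : τ ≤ t) :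
    IntegrableOn (fun E => exp (-t * (E - η))) (Ioi η) N.measure := by
  have hmeas : ∀ t, Measurable fun E : ℝ => exp (-t * (E - η)) := fun t =>
    measurable_exp.comp ((measurable_id.sub_const η).const_mul (-t))
  have hτ : IntegrableOn (fun E => exp (-τ * (E - η))) (Ioi η) N.measure :=
    ⟨(hmeas τ).aestronglyMeasurable, by
      rwa [hasFiniteIntegral_iff_ofReal (ae_of_all _ fun E => (exp_pos _).le)]⟩
  refine Integrable.mono hτ (hmeas t).aestronglyMeasurable <|
    (ae_restrict_iff' _root_.measurableSet_Ioi).2 (ae_of_all _ fun E (hE : η < E) => ?_)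
  simp only [norm_eq_abs, abs_of_pos (exp_pos _)]
  exact exp_le_exp.2 (by nlinarith)

theorem setIntegral_Ioc_const (hNη : N η = 0) (hE : 0 ≤ E) (c : ℝ) :
    ∫ _ in Ioc η (η + E), c ∂N.measure = N (η + E) * c := by
  rw [setIntegral_const, measureReal_def, N.measure_Ioc, hNη, sub_zero,
    ENNReal.toReal_ofReal (hNη ▸ N.mono (by linarith)), smul_eq_mul]

theorem integrableOn_Ioc_const (c : ℝ) : IntegrableOn (fun _ => c) (Ioc η (η + E)) N.measure :=
  integrableOn_const (by simp [N.measure_Ioc])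

theorem exp_mul_le_shiftedLaplace (hNη : N η = 0) (ht : 0 ≤ t)
    (hint : IntegrableOn (fun E => exp (-t * (E - η))) (Ioi η) N.measure) (hE : 0 < E) :
    exp (-t * E) * N (η + E) ≤ shiftedLaplace N η t :=
  calc exp (-t * E) * N (η + E) = ∫ _ in Ioc η (η + E), exp (-t * E) ∂N.measure := by
        rw [setIntegral_Ioc_const hNη hE.le, mul_comm]
    _ ≤ ∫ s in Ioc η (η + E), exp (-t * (s - η)) ∂N.measure :=
        setIntegral_mono_on (integrableOn_Ioc_const _) (hint.mono_set Ioc_subset_Ioi_self)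
          measurableSet_Ioc fun s hs => exp_le_exp.2 (by nlinarith [hs.1, hs.2])
    _ ≤ shiftedLaplace N η t :=
        setIntegral_mono_set hint (ae_of_all _ fun s => (exp_pos _).le)
          Ioc_subset_Ioi_self.eventuallyLE

theorem shiftedLaplace_le (hNη : N η = 0) (hτ : 0 ≤ τ)
    (hfin : ∫⁻ E in Ioi η, ENNReal.ofReal (exp (-τ * (E - η))) ∂N.measure < ⊤) (ht : τ ≤ t)
    (hE : 0 < E) :
    shiftedLaplace N η t ≤ N (η + E) + exp (-(t - τ) * E) * shiftedLaplace N η τ := by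
  have hintτ := integrableOn_exp_neg_mul_sub hfin le_rfl
  have hint := integrableOn_exp_neg_mul_sub hfin ht
  have hsub : Ioi (η + E) ⊆ Ioi η := Ioi_subset_Ioi (by linarith)
  have hnear : ∫ s in Ioc η (η + E), exp (-t * (s - η)) ∂N.measure ≤ N (η + E) := by
    calc _ ≤ ∫ _ in Ioc η (η + E), (1 : ℝ) ∂N.measure :=
          setIntegral_mono_on (hint.mono_set Ioc_subset_Ioi_self) (integrableOn_Ioc_const _)
            measurableSet_Ioc fun s hs => exp_le_one_iff.2 (by nlinarith [hs.1])
      _ = N (η + E) := by rw [setIntegral_Ioc_const hNη hE.le, mul_one]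
  have hfar : ∫ s in Ioi (η + E), exp (-t * (s - η)) ∂N.measure
      ≤ exp (-(t - τ) * E) * shiftedLaplace N η τ := by
    calc _ ≤ ∫ s in Ioi (η + E), exp (-(t - τ) * E) * exp (-τ * (s - η)) ∂N.measure :=
          setIntegral_mono_on (hint.mono_set hsub) ((hintτ.mono_set hsub).const_mul _)
            _root_.measurableSet_Ioi fun s (hs : η + E < s) => by
              rw [← exp_add]; exact exp_le_exp.2 (by nlinarith)
      _ ≤ exp (-(t - τ) * E) * shiftedLaplace N η τ := by
          rw [integral_const_mul]
          exact mul_le_mul_of_nonneg_left (setIntegral_mono_set hintτ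
            (ae_of_all _ fun s => (exp_pos _).le) hsub.eventuallyLE) (exp_pos _).le
  rw [shiftedLaplace, ← Ioc_union_Ioi_eq_Ioi (by linarith : η ≤ η + E),
    setIntegral_union (Ioc_disjoint_Ioi le_rfl) _root_.measurableSet_Ioi
      (hint.mono_set Ioc_subset_Ioi_self) (hint.mono_set hsub)]
  linarith

theorem laplaceBounds (hN0 : ∀ E ≤ η, N E = 0) (hNne : ∃ E, N E ≠ 0) (hτ : 0 < τ)
    (hfin : ∫⁻ E in Ioi η, ENNReal.ofReal (exp (-τ * (E - η))) ∂N.measure < ⊤) :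
    LaplaceBounds (fun E => N (η + E)) (shiftedLaplace N η) τ := by
  have hNη := hN0 η le_rfl
  have hchern : ∀ t ≥ τ, ∀ E > 0, exp (-t * E) * N (η + E) ≤ shiftedLaplace N η t :=
    fun t ht E hE => exp_mul_le_shiftedLaplace hNη (by linarith)
      (integrableOn_exp_neg_mul_sub hfin ht) hE
  refine ⟨fun E hE => hNη ▸ N.mono (by linarith), ?_, fun t ht => ?_, hchern,
    fun t ht E hE => shiftedLaplace_le hNη hτ.le hfin ht hE⟩
  · have hright := (N.right_continuous η).tendsto
    rw [hNη] at hright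
    refine hright.comp (tendsto_nhdsWithin_of_tendsto_nhds_of_eventually_within _ ?_ ?_)
    · exact ((continuous_const_add η).tendsto' 0 η (add_zero η)).mono_left nhdsWithin_le_nhds
    · filter_upwards [self_mem_nhdsWithin] with E (hE : 0 < E)
      exact mem_Ici.2 (by linarith)
  · obtain ⟨E, hE⟩ := hNne
    have hηE : η < E := lt_of_not_ge fun h => hE (hN0 E h)
    have hpos : 0 < N (η + (E - η)) := by
      rw [add_sub_cancel]
      exact (hNη ▸ N.mono hηE.le).lt_of_ne' hE
    exact (mul_pos (exp_pos _) hpos).trans_le (hchern t ht _ (sub_pos.2 hηE))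

end StieltjesFunction

/-- Tauberian theorem of exponential type, boundary case `γ = 0`:
`lim_{t→∞} f(t) log Ñ(t) = -1` iff `lim_{E↓0} log N(η+E)/f#(1/E) = -1`. -/
theorem stmt_12
    (η : ℝ) (N : StieltjesFunction ℝ)
    (hN0 : ∀ E ≤ η, N E = 0)
    (hNne : ∃ E, N E ≠ 0)
    (hfin : ∃ τ > 0,
      (∫⁻ E in Set.Ioi η, ENNReal.ofReal (Real.exp (-τ * (E - η))) ∂N.measure) < ⊤)
    (f fs : ℝ → ℝ)
    (hfpos : ∀ t > 0, 0 < f t) (hfspos : ∀ t > 0, 0 < fs t)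
    (hfmeas : Measurable f) (hfsmeas : Measurable fs)
    (hfslow : ∀ c > 0, Tendsto (fun t : ℝ => f (c * t) / f t) atTop (nhds 1))
    (hfsslow : ∀ c > 0, Tendsto (fun t : ℝ => fs (c * t) / fs t) atTop (nhds 1))
    (hconj1 : Tendsto (fun t : ℝ => f t * fs (t * f t)) atTop (nhds 1))
    (hconj2 : Tendsto (fun t : ℝ => fs t * f (t * fs t)) atTop (nhds 1)) :
    Tendsto (fun t : ℝ =>
        f t * Real.log (∫ E in Set.Ioi η, Real.exp (-t * (E - η)) ∂N.measure))
        atTop (nhds (-1)) ↔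
      Tendsto (fun E : ℝ => Real.log (N (η + E)) / fs (1 / E))
        (nhdsWithin 0 (Set.Ioi 0)) (nhds (-1)) := by
  obtain ⟨τ, hτ, hfinτ⟩ := hfin
  exact (N.laplaceBounds hN0 hNne hτ hfinτ).tendsto_mul_log_iff ⟨hfpos, hfmeas, hfslow⟩
    ⟨hfspos, hfsmeas, hfsslow⟩ hconj1 hconj2
end

section
/- Let N : ℝ → ℝ be nondecreasing and right-continuous with N(E) = 0 for all E ≤ 0 and N not identically zero, with associated Lebesgue–Stieltjes measure μ_N and Laplace–Stieltjes transform Ñ(t) := ∫_{(0,∞)} e^{−tE} dμ_N(E). Assume Ñ(τ) < ∞ for some τ > 0, let (f, f#) be a de Bruijn conjugate pair of slowly varying functions with lim_{t→∞} f(t) = 0 and lim_{t→∞} f#(t) = ∞, and assume that either lim_{t→∞} f(t) · log Ñ(t) = −1 or lim_{E↓0} (log N(E)) / f#(1/E) = −1. Then there exists E₀ > 0 such that for all E ∈ (0, E₀): N(E) ≥ Ñ(f#(1/E)/E) − 2 exp(−(9/8) f#(1/E)). -/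
/-!
Write `F = f#(1/E)` and `t = F/E`. Splitting `Ñ(t)` at `E`, the part over `(0, E]` is at most
`μ_N (0, E] = N(E)`, so it suffices to bound the tail `∫_{(E,∞)} e^{-tx} dμ_N` by `2 e^{-9F/8}`.
Since `e^{-tx} ≤ e^{-(t-σ)a} e^{-σx}` for `x ≥ a`, the tail beyond `a` is at most `e^{-(t-σ)a} Ñ(σ)`.

If `f(t) log Ñ(t) → -1`, take `a = E`, `σ = t/2`: slow variation of `f` and conjugacy give
`log Ñ(t/2) ~ -1/f(t/2) ~ -F`, so the tail is at most `e^{-F/2} e^{-5F/8}`.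

If `log N(E) / F → -1`, slow variation of `f#` gives `N(2E) ≤ e^{-F/2}`, so the part over
`(E, 2E]` is at most `e^{-F} N(2E) ≤ e^{-3F/2}`, while the part beyond `2E` is at most
`e^{-2F} e^{2τE} Ñ(τ) ≤ e^{-9F/8}` once `F` is large.
-/

open MeasureTheory Filter Real Set Topology

section Laplace

variable {μ : Measure ℝ}

theorem integrableOn_exp_neg_mul_Ioi_of_lintegral_lt_top {τ : ℝ}
    (hτ : ∫⁻ x in Ioi 0, ENNReal.ofReal (exp (-τ * x)) ∂μ < ⊤) :
    IntegrableOn (fun x => exp (-τ * x)) (Ioi 0) μ :=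
  ⟨by fun_prop, (hasFiniteIntegral_iff_ofReal (.of_forall fun _ => (exp_pos _).le)).2 hτ⟩

theorem exp_neg_mul_le_exp_neg_mul {σ t a x : ℝ} (hσt : σ ≤ t) (hax : a ≤ x) :
    exp (-t * x) ≤ exp (-(t - σ) * a) * exp (-σ * x) := by
  rw [← exp_add, exp_le_exp]
  nlinarith

theorem MeasureTheory.IntegrableOn.exp_neg_mul_of_le {σ t : ℝ}
    (hσ : IntegrableOn (fun x => exp (-σ * x)) (Ioi 0) μ) (hσt : σ ≤ t) :
    IntegrableOn (fun x => exp (-t * x)) (Ioi 0) μ := by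
  refine hσ.mono' (by fun_prop)
    ((ae_restrict_iff' measurableSet_Ioi).2 (.of_forall fun x hx => ?_))
  rw [norm_of_nonneg (exp_pos _).le, exp_le_exp]
  nlinarith [mem_Ioi.1 hx]

theorem setIntegral_Ioi_exp_neg_mul_le {σ t a : ℝ} (ha : 0 ≤ a) (hσt : σ ≤ t)
    (hσ : IntegrableOn (fun x => exp (-σ * x)) (Ioi 0) μ) :
    ∫ x in Ioi a, exp (-t * x) ∂μ ≤ exp (-(t - σ) * a) * ∫ x in Ioi 0, exp (-σ * x) ∂μ := by
  have hsub : Ioi a ⊆ Ioi 0 := Ioi_subset_Ioi ha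
  calc ∫ x in Ioi a, exp (-t * x) ∂μ
      ≤ ∫ x in Ioi a, exp (-(t - σ) * a) * exp (-σ * x) ∂μ := by
        refine integral_mono_of_nonneg (.of_forall fun _ => (exp_pos _).le)
          ((hσ.mono_set hsub).const_mul _) ?_
        refine (ae_restrict_iff' measurableSet_Ioi).2 (.of_forall fun x hx => ?_)
        exact exp_neg_mul_le_exp_neg_mul hσt (mem_Ioi.1 hx).le
    _ = exp (-(t - σ) * a) * ∫ x in Ioi a, exp (-σ * x) ∂μ := integral_const_mul _ _
    _ ≤ exp (-(t - σ) * a) * ∫ x in Ioi 0, exp (-σ * x) ∂μ :=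
        mul_le_mul_of_nonneg_left
          (setIntegral_mono_set hσ (.of_forall fun _ => (exp_pos _).le) hsub.eventuallyLE)
          (exp_pos _).le

theorem setIntegral_Ioi_eq_Ioc_add_Ioi {g : ℝ → ℝ} {a b : ℝ} (hab : a ≤ b)
    (hg : IntegrableOn g (Ioi a) μ) :
    ∫ x in Ioi a, g x ∂μ = (∫ x in Ioc a b, g x ∂μ) + ∫ x in Ioi b, g x ∂μ := by
  rw [← setIntegral_union (Ioc_disjoint_Ioi le_rfl) measurableSet_Ioi
    (hg.mono_set Ioc_subset_Ioi_self) (hg.mono_set (Ioi_subset_Ioi hab)),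
    Ioc_union_Ioi_eq_Ioi hab]

end Laplace

theorem StieltjesFunction.setIntegral_Ioc_exp_neg_mul_le (N : StieltjesFunction ℝ) {t a b : ℝ}
    (ht : 0 ≤ t) (hab : a ≤ b) :
    ∫ x in Ioc a b, exp (-t * x) ∂N.measure ≤ exp (-t * a) * (N b - N a) := by
  have hbound := norm_setIntegral_le_of_norm_le_const (C := exp (-t * a)) (s := Ioc a b)
    (f := fun x => exp (-t * x)) (N.measure_Ioc a b ▸ ENNReal.ofReal_lt_top) fun x hx => by
      rw [norm_of_nonneg (exp_pos _).le, exp_le_exp]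
      nlinarith [hx.1]
  rw [measureReal_def, N.measure_Ioc, ENNReal.toReal_ofReal (sub_nonneg.2 (N.mono hab))]
    at hbound
  exact (le_abs_self _).trans hbound

theorem StieltjesFunction.setIntegral_Ioi_zero_exp_neg_mul_le (N : StieltjesFunction ℝ)
    (hN0 : N 0 = 0) {t E : ℝ} (ht : 0 ≤ t) (hE : 0 ≤ E)
    (hint : IntegrableOn (fun x => exp (-t * x)) (Ioi 0) N.measure) :
    ∫ x in Ioi 0, exp (-t * x) ∂N.measure ≤ N E + ∫ x in Ioi E, exp (-t * x) ∂N.measure := by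
  rw [setIntegral_Ioi_eq_Ioc_add_Ioi hE hint]
  gcongr
  simpa [hN0] using N.setIntegral_Ioc_exp_neg_mul_le ht hE

theorem tendsto_one_div_nhdsGT_zero : Tendsto (fun E : ℝ => 1 / E) (𝓝[>] 0) atTop := by
  simpa only [one_div] using tendsto_inv_nhdsGT_zero

theorem tendsto_comp_one_div_div_self {fs : ℝ → ℝ} (hfs : Tendsto fs atTop atTop) :
    Tendsto (fun E => fs (1 / E) / E) (𝓝[>] 0) atTop := by
  have h := tendsto_one_div_nhdsGT_zero.atTop_mul_atTop₀ (hfs.comp tendsto_one_div_nhdsGT_zero)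
  refine h.congr fun E => ?_
  simp only [Function.comp_apply, one_div_mul_eq_div]

theorem Filter.Tendsto.mul_comp_const_mul {α : Type*} {l : Filter α} {a v : α → ℝ} {g : ℝ → ℝ}
    {c L : ℝ} (h : Tendsto (fun x => a x * g (v x)) l (𝓝 L)) (hL : L ≠ 0)
    (hg : Tendsto (fun t => g (c * t) / g t) atTop (𝓝 1)) (hv : Tendsto v l atTop) :
    Tendsto (fun x => a x * g (c * v x)) l (𝓝 L) := by
  have hprod := h.mul (hg.comp hv)
  rw [mul_one] at hprod
  refine hprod.congr' ?_
  filter_upwards [h.eventually_ne hL] with x hx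
  have hgv : g (v x) ≠ 0 := right_ne_zero_of_mul (by simpa using hx)
  simp only [Function.comp_apply]
  field_simp

theorem tendsto_comp_const_mul_div_of_conjugate {f fs g : ℝ → ℝ} {c L : ℝ} (hc : 0 < c)
    (hf : Tendsto (fun t => f (c * t) / f t) atTop (𝓝 1))
    (hconj : Tendsto (fun t => fs t * f (t * fs t)) atTop (𝓝 1))
    (hfs : Tendsto fs atTop atTop) (hg : Tendsto (fun t => f t * g t) atTop (𝓝 L)) :
    Tendsto (fun E => g (c * (fs (1 / E) / E)) / fs (1 / E)) (𝓝[>] 0) (𝓝 L) := by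
  have ht := tendsto_comp_one_div_div_self hfs
  have hconj' : Tendsto (fun E => fs (1 / E) * f (fs (1 / E) / E)) (𝓝[>] 0) (𝓝 1) :=
    (hconj.comp tendsto_one_div_nhdsGT_zero).congr fun E => by
      simp only [Function.comp_apply, one_div_mul_eq_div]
  have hconjc := hconj'.mul_comp_const_mul one_ne_zero hf ht
  have hratio := (hg.comp (ht.const_mul_atTop hc)).div hconjc one_ne_zero
  rw [div_one] at hratio
  refine hratio.congr' ?_
  filter_upwards [hconjc.eventually_ne zero_ne_one.symm] with E hE
  simp only [Pi.div_apply, Function.comp_apply]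
  rw [mul_comm (fs _), mul_div_mul_left _ _ (right_ne_zero_of_mul hE)]

theorem tendsto_comp_const_mul_div {fs g : ℝ → ℝ} {c L : ℝ} (hc : 0 < c)
    (hfs_slow : Tendsto (fun t => fs (c⁻¹ * t) / fs t) atTop (𝓝 1))
    (hfs : Tendsto fs atTop atTop) (hg : Tendsto (fun E => g E / fs (1 / E)) (𝓝[>] 0) (𝓝 L)) :
    Tendsto (fun E => g (c * E) / fs (1 / E)) (𝓝[>] 0) (𝓝 L) := by
  have hcE : Tendsto (fun E : ℝ => c * E) (𝓝[>] 0) (𝓝[>] 0) :=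
    tendsto_iff_comap.2 (comap_mulLeft_nhdsGT_zero hc).ge
  have hprod := (hg.comp hcE).mul (hfs_slow.comp tendsto_one_div_nhdsGT_zero)
  rw [mul_one] at hprod
  refine hprod.congr' ?_
  filter_upwards [(hfs.comp (tendsto_one_div_nhdsGT_zero.comp hcE)).eventually_gt_atTop 0]
    with E hE
  have harg : 1 / (c * E) = c⁻¹ * (1 / E) := by rw [one_div, one_div, mul_inv]
  simp only [Function.comp_apply, harg] at hE ⊢
  exact div_mul_div_cancel₀ hE.ne'

theorem eventually_setIntegral_Ioi_le_of_tendsto_log_laplace_div {μ : Measure ℝ} {fs : ℝ → ℝ}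
    {τ : ℝ} (hτ : IntegrableOn (fun x => exp (-τ * x)) (Ioi 0) μ) (hfs : Tendsto fs atTop atTop)
    (hlog : Tendsto (fun E => log (∫ x in Ioi 0, exp (-(2⁻¹ * (fs (1 / E) / E)) * x) ∂μ) /
      fs (1 / E)) (𝓝[>] 0) (𝓝 (-1))) :
    ∀ᶠ E in 𝓝[>] 0,
      ∫ x in Ioi E, exp (-(fs (1 / E) / E) * x) ∂μ ≤ exp (-(9 / 8) * fs (1 / E)) := by
  have hσ := (tendsto_comp_one_div_div_self hfs).const_mul_atTop (by norm_num : (0 : ℝ) < 2⁻¹)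
  filter_upwards [self_mem_nhdsWithin,
    (hfs.comp tendsto_one_div_nhdsGT_zero).eventually_gt_atTop 0, hσ.eventually_ge_atTop τ,
    hlog.eventually_le_const (by norm_num : (-1 : ℝ) < -(5 / 8))]
    with E (hE : 0 < E) hF hτσ hlogE
  simp only [Function.comp_apply] at hF
  set F := fs (1 / E)
  have hlogE' : log (∫ x in Ioi 0, exp (-(2⁻¹ * (F / E)) * x) ∂μ) ≤ -(5 / 8) * F := by
    have := (div_le_iff₀ hF).1 hlogE
    linarith
  have hσt : 2⁻¹ * (F / E) ≤ F / E := by linarith [div_pos hF hE]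
  calc ∫ x in Ioi E, exp (-(F / E) * x) ∂μ
      ≤ exp (-(F / E - 2⁻¹ * (F / E)) * E) * ∫ x in Ioi 0, exp (-(2⁻¹ * (F / E)) * x) ∂μ :=
        setIntegral_Ioi_exp_neg_mul_le hE.le hσt (hτ.exp_neg_mul_of_le hτσ)
    _ = exp (-(F / 2)) * ∫ x in Ioi 0, exp (-(2⁻¹ * (F / E)) * x) ∂μ := by
        congr 2
        field_simp
        ring
    _ ≤ exp (-(F / 2)) * exp (-(5 / 8) * F) :=
        mul_le_mul_of_nonneg_left ((le_exp_log _).trans (exp_le_exp.2 hlogE')) (exp_pos _).le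
    _ = exp (-(9 / 8) * F) := by
        rw [← exp_add]
        ring_nf

theorem StieltjesFunction.setIntegral_Ioi_exp_neg_mul_le_of_le (N : StieltjesFunction ℝ)
    (hN0 : N 0 = 0) {τ F E : ℝ} (hE : 0 < E) (hF : 0 ≤ F) (hτt : τ ≤ F / E)
    (hτ : IntegrableOn (fun x => exp (-τ * x)) (Ioi 0) N.measure)
    (hN2E : N (2 * E) ≤ exp (-(1 / 2) * F))
    (hC : exp (2 * τ * E) * ∫ x in Ioi 0, exp (-τ * x) ∂N.measure ≤ exp (7 / 8 * F)) :
    ∫ x in Ioi E, exp (-(F / E) * x) ∂N.measure ≤ 2 * exp (-(9 / 8) * F) := by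
  have hnear : ∫ x in Ioc E (2 * E), exp (-(F / E) * x) ∂N.measure ≤ exp (-(9 / 8) * F) :=
    calc ∫ x in Ioc E (2 * E), exp (-(F / E) * x) ∂N.measure
        ≤ exp (-(F / E) * E) * (N (2 * E) - N E) :=
          N.setIntegral_Ioc_exp_neg_mul_le (div_nonneg hF hE.le) (by linarith)
      _ ≤ exp (-F) * exp (-(1 / 2) * F) := by
          rw [neg_mul, div_mul_cancel₀ F hE.ne']
          have hNE : 0 ≤ N E := hN0 ▸ N.mono hE.le
          exact mul_le_mul_of_nonneg_left (by linarith) (exp_pos _).le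
      _ ≤ exp (-(9 / 8) * F) := by
          rw [← exp_add, exp_le_exp]
          linarith
  have hfar : ∫ x in Ioi (2 * E), exp (-(F / E) * x) ∂N.measure ≤ exp (-(9 / 8) * F) :=
    calc ∫ x in Ioi (2 * E), exp (-(F / E) * x) ∂N.measure
        ≤ exp (-(F / E - τ) * (2 * E)) * ∫ x in Ioi 0, exp (-τ * x) ∂N.measure :=
          setIntegral_Ioi_exp_neg_mul_le (by linarith) hτt hτ
      _ = exp (-(2 * F)) * (exp (2 * τ * E) * ∫ x in Ioi 0, exp (-τ * x) ∂N.measure) := by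
          rw [← mul_assoc (exp _), ← exp_add]
          congr 2
          field_simp
          ring
      _ ≤ exp (-(2 * F)) * exp (7 / 8 * F) := mul_le_mul_of_nonneg_left hC (exp_pos _).le
      _ = exp (-(9 / 8) * F) := by
          rw [← exp_add]
          ring_nf
  have hint : IntegrableOn (fun x => exp (-(F / E) * x)) (Ioi E) N.measure :=
    (hτ.exp_neg_mul_of_le hτt).mono_set (Ioi_subset_Ioi hE.le)
  rw [setIntegral_Ioi_eq_Ioc_add_Ioi (b := 2 * E) (by linarith) hint]
  linarith

theorem StieltjesFunction.eventually_setIntegral_Ioi_le_of_tendsto_log_div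
    (N : StieltjesFunction ℝ) (hN0 : N 0 = 0) {fs : ℝ → ℝ} {τ : ℝ}
    (hτ : IntegrableOn (fun x => exp (-τ * x)) (Ioi 0) N.measure) (hfs : Tendsto fs atTop atTop)
    (hlog : Tendsto (fun E => log (N (2 * E)) / fs (1 / E)) (𝓝[>] 0) (𝓝 (-1))) :
    ∀ᶠ E in 𝓝[>] 0, ∫ x in Ioi E, exp (-(fs (1 / E) / E) * x) ∂N.measure ≤
      2 * exp (-(9 / 8) * fs (1 / E)) := by
  set C := ∫ x in Ioi 0, exp (-τ * x) ∂N.measure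
  have hF := hfs.comp tendsto_one_div_nhdsGT_zero
  have hC : Tendsto (fun E => exp (2 * τ * E) * C) (𝓝[>] 0) (𝓝 C) := by
    have : Continuous fun E => exp (2 * τ * E) * C := by fun_prop
    simpa using (this.tendsto 0).mono_left nhdsWithin_le_nhds
  have hexpF := tendsto_exp_atTop.comp (hF.const_mul_atTop (by norm_num : (0 : ℝ) < 7 / 8))
  filter_upwards [self_mem_nhdsWithin, hF.eventually_gt_atTop 0,
    (tendsto_comp_one_div_div_self hfs).eventually_ge_atTop τ,
    hlog.eventually_le_const (by norm_num : (-1 : ℝ) < -(1 / 2)),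
    hC.eventually_le_const (lt_add_one C), hexpF.eventually_ge_atTop (C + 1)]
    with E (hE : 0 < E) hFpos hτt hlogE hCE hexpFE
  simp only [Function.comp_apply] at hFpos hexpFE
  refine N.setIntegral_Ioi_exp_neg_mul_le_of_le hN0 hE hFpos.le hτt hτ ?_ (hCE.trans hexpFE)
  refine (le_exp_log _).trans (exp_le_exp.2 ?_)
  have := (div_le_iff₀ hFpos).1 hlogE
  linarith

theorem stmt_14_general
    (N : StieltjesFunction ℝ) (hN0 : ∀ E ≤ (0 : ℝ), N E = 0)
    (hfin : ∃ τ > 0,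
      (∫⁻ E in Set.Ioi (0 : ℝ), ENNReal.ofReal (Real.exp (-τ * E)) ∂N.measure) < ⊤)
    (f fs : ℝ → ℝ)
    (hfslow : ∀ c > 0, Tendsto (fun t : ℝ => f (c * t) / f t) atTop (nhds 1))
    (hfsslow : ∀ c > 0, Tendsto (fun t : ℝ => fs (c * t) / fs t) atTop (nhds 1))
    (hconj2 : Tendsto (fun t : ℝ => fs t * f (t * fs t)) atTop (nhds 1))
    (hfstop : Tendsto fs atTop atTop)
    (hyp : Tendsto (fun t : ℝ =>
          f t * Real.log (∫ E in Set.Ioi (0 : ℝ), Real.exp (-t * E) ∂N.measure))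
          atTop (nhds (-1)) ∨
        Tendsto (fun E : ℝ => Real.log (N E) / fs (1 / E))
          (nhdsWithin 0 (Set.Ioi 0)) (nhds (-1))) :
    ∃ E₀ > 0, ∀ E ∈ Set.Ioo (0 : ℝ) E₀,
      (∫ x in Set.Ioi (0 : ℝ), Real.exp (-(fs (1 / E) / E) * x) ∂N.measure) -
        2 * Real.exp (-(9 / 8) * fs (1 / E)) ≤ N E := by
  obtain ⟨τ, hτ, hτfin⟩ := hfin
  have hint := integrableOn_exp_neg_mul_Ioi_of_lintegral_lt_top hτfin
  have htail : ∀ᶠ E in 𝓝[>] 0, ∫ x in Ioi E, exp (-(fs (1 / E) / E) * x) ∂N.measure ≤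
      2 * exp (-(9 / 8) * fs (1 / E)) := by
    rcases hyp with hlaplace | hcount
    · filter_upwards [eventually_setIntegral_Ioi_le_of_tendsto_log_laplace_div hint hfstop
        (tendsto_comp_const_mul_div_of_conjugate (by norm_num) (hfslow 2⁻¹ (by norm_num))
          hconj2 hfstop hlaplace)] with E hE
      linarith [exp_pos (-(9 / 8) * fs (1 / E))]
    · refine N.eventually_setIntegral_Ioi_le_of_tendsto_log_div (hN0 0 le_rfl) hint hfstop ?_
      exact tendsto_comp_const_mul_div two_pos (hfsslow 2⁻¹ (by norm_num)) hfstop hcount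
  obtain ⟨E₀, hE₀, hE₀_mem⟩ := (nhdsGT_basis 0).eventually_iff.1
    (htail.and ((tendsto_comp_one_div_div_self hfstop).eventually_ge_atTop τ))
  refine ⟨E₀, hE₀, fun E hE => ?_⟩
  obtain ⟨hE_tail, hτt⟩ := hE₀_mem hE
  have := N.setIntegral_Ioi_zero_exp_neg_mul_le (hN0 0 le_rfl) (hτ.le.trans hτt) hE.1.le
    (hint.exp_neg_mul_of_le hτt)
  linarith

/-- Lower bound of Lemma TL2: for sufficiently small `E > 0`,
`N(E) ≥ Ñ(f#(1/E)/E) - 2 exp(-(9/8) f#(1/E))`. -/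
theorem stmt_14
    (N : StieltjesFunction ℝ) (hN0 : ∀ E ≤ (0 : ℝ), N E = 0) (hNne : ∃ E, N E ≠ 0)
    (hfin : ∃ τ > 0,
      (∫⁻ E in Set.Ioi (0 : ℝ), ENNReal.ofReal (Real.exp (-τ * E)) ∂N.measure) < ⊤)
    (f fs : ℝ → ℝ)
    (hfpos : ∀ t > 0, 0 < f t) (hfspos : ∀ t > 0, 0 < fs t)
    (hfmeas : Measurable f) (hfsmeas : Measurable fs)
    (hfslow : ∀ c > 0, Tendsto (fun t : ℝ => f (c * t) / f t) atTop (nhds 1))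
    (hfsslow : ∀ c > 0, Tendsto (fun t : ℝ => fs (c * t) / fs t) atTop (nhds 1))
    (hconj1 : Tendsto (fun t : ℝ => f t * fs (t * f t)) atTop (nhds 1))
    (hconj2 : Tendsto (fun t : ℝ => fs t * f (t * fs t)) atTop (nhds 1))
    (hf0 : Tendsto f atTop (nhds 0))
    (hfstop : Tendsto fs atTop atTop)
    (hyp : Tendsto (fun t : ℝ =>
          f t * Real.log (∫ E in Set.Ioi (0 : ℝ), Real.exp (-t * E) ∂N.measure))
          atTop (nhds (-1)) ∨
        Tendsto (fun E : ℝ => Real.log (N E) / fs (1 / E))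
          (nhdsWithin 0 (Set.Ioi 0)) (nhds (-1))) :
    ∃ E₀ > 0, ∀ E ∈ Set.Ioo (0 : ℝ) E₀,
      (∫ x in Set.Ioi (0 : ℝ), Real.exp (-(fs (1 / E) / E) * x) ∂N.measure) -
        2 * Real.exp (-(9 / 8) * fs (1 / E)) ≤ N E :=
  stmt_14_general N hN0 hfin f fs hfslow hfsslow hconj2 hfstop hyp
end

section
/- Let N : ℝ → ℝ be nondecreasing and right-continuous with N(E) = 0 for all E ≤ 0 and N not identically zero, with associated Lebesgue–Stieltjes measure μ_N and Laplace–Stieltjes transform Ñ(t) := ∫_{(0,∞)} e^{−tE} dμ_N(E). Assume Ñ(τ) < ∞ for some τ > 0, let (f, f#) be a de Bruijn conjugate pair of slowly varying functions with lim_{t→∞} f(t) = 0 and lim_{t→∞} f#(t) = ∞, and assume lim_{t→∞} f(t) · log Ñ(t) = −1. Then there exists E₀ > 0 such that N(E) ≤ exp(−f#(1/E)/2) for all E ∈ (0, E₀). -/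
/-!
Chebyshev's inequality for the Laplace–Stieltjes transform gives `N(E) ≤ e^{tE} Ñ(t)` for all
`t ≥ 0`. Put `s = 1/E` and `t = s f#(s) / 8`. Slow variation of `f` and the conjugacy relation
give `f(t) f#(s) → 1`, so the hypothesis yields `log Ñ(t) ≈ -1 / f(t) ≈ -f#(s)`, whence
`tE + log Ñ(t) ≈ f#(s)/8 - f#(s) ≤ -f#(s)/2` for small `E`.
-/

open MeasureTheory Filter Real Set Topology

noncomputable def laplaceTransform (μ : Measure ℝ) (t : ℝ) : ℝ := ∫ x in Ioi 0, exp (-t * x) ∂μ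

theorem exp_mul_measureReal_Ioc_le_laplaceTransform {μ : Measure ℝ} [IsLocallyFiniteMeasure μ]
    {t : ℝ} (ht : 0 ≤ t) (hint : IntegrableOn (fun x => exp (-t * x)) (Ioi 0) μ) (E : ℝ) :
    exp (-t * E) * μ.real (Ioc 0 E) ≤ laplaceTransform μ t :=
  calc exp (-t * E) * μ.real (Ioc 0 E) ≤ ∫ x in Ioc 0 E, exp (-t * x) ∂μ :=
        setIntegral_ge_of_const_le_real measurableSet_Ioc measure_Ioc_lt_top.ne
          (fun x hx => exp_le_exp.2 (by nlinarith [hx.2])) (hint.mono_set Ioc_subset_Ioi_self)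
    _ ≤ laplaceTransform μ t :=
        setIntegral_mono_set hint (ae_of_all _ fun _ => (exp_pos _).le)
          Ioc_subset_Ioi_self.eventuallyLE

theorem StieltjesFunction.le_exp_mul_laplaceTransform (N : StieltjesFunction ℝ) (hN : N 0 = 0)
    {t : ℝ} (ht : 0 ≤ t) (hint : IntegrableOn (fun x => exp (-t * x)) (Ioi 0) N.measure)
    (E : ℝ) : N E ≤ exp (t * E) * laplaceTransform N.measure t := by
  have hIoc : N E ≤ N.measure.real (Ioc 0 E) := by
    rw [measureReal_def, N.measure_Ioc, hN, sub_zero, ENNReal.toReal_ofReal']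
    exact le_max_left _ _
  calc N E = exp (t * E) * (exp (-t * E) * N E) := by
        rw [← mul_assoc, ← exp_add, neg_mul, add_neg_cancel, exp_zero, one_mul]
    _ ≤ exp (t * E) * laplaceTransform N.measure t := by
        gcongr
        exact (mul_le_mul_of_nonneg_left hIoc (exp_pos _).le).trans
          (exp_mul_measureReal_Ioc_le_laplaceTransform ht hint E)

theorem tendsto_mul_of_tendsto_div_of_tendsto_mul {α : Type*} {l : Filter α} {g h k : α → ℝ}
    (hgh : Tendsto (fun x => g x / h x) l (𝓝 1)) (hhk : Tendsto (fun x => h x * k x) l (𝓝 1)) :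
    Tendsto (fun x => g x * k x) l (𝓝 1) := by
  have hprod := hgh.mul hhk
  rw [one_mul] at hprod
  refine hprod.congr' ?_
  filter_upwards [hhk.eventually_ne one_ne_zero] with x hx
  have : h x ≠ 0 := left_ne_zero_of_mul (by simpa using hx)
  field_simp

theorem tendsto_mul_comp_const_mul_of_conjugate {f fs : ℝ → ℝ} {c : ℝ}
    (hf : Tendsto (fun t => f (c * t) / f t) atTop (𝓝 1))
    (hconj : Tendsto (fun s => fs s * f (s * fs s)) atTop (𝓝 1))
    (hfs : Tendsto fs atTop atTop) :
    Tendsto (fun s => fs s * f (c * (s * fs s))) atTop (𝓝 1) := by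
  have hu : Tendsto (fun s => s * fs s) atTop atTop := tendsto_id.atTop_mul_atTop₀ hfs
  simp_rw [mul_comm (fs _) (f _)] at hconj ⊢
  exact tendsto_mul_of_tendsto_div_of_tendsto_mul (hf.comp hu) hconj

theorem exists_forall_Ioo_of_eventually_atTop {P : ℝ → Prop} (h : ∀ᶠ s in atTop, P s) :
    ∃ E₀ > 0, ∀ E ∈ Ioo 0 E₀, P (1 / E) := by
  have h' : ∀ᶠ E in 𝓝[>] 0, P (1 / E) := by
    simpa only [one_div] using tendsto_inv_nhdsGT_zero.eventually h
  obtain ⟨E₀, hE₀, hsub⟩ := mem_nhdsGT_iff_exists_Ioo_subset.1 h'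
  exact ⟨E₀, hE₀, hsub⟩

theorem eventually_log_le_of_conjugate {f fs L : ℝ → ℝ}
    (hf : Tendsto (fun t => f (1 / 8 * t) / f t) atTop (𝓝 1))
    (hconj : Tendsto (fun s => fs s * f (s * fs s)) atTop (𝓝 1))
    (hfs : Tendsto fs atTop atTop)
    (hL : Tendsto (fun t => f t * log (L t)) atTop (𝓝 (-1))) :
    ∀ᶠ s in atTop, log (L (1 / 8 * (s * fs s))) ≤ -(5 / 8) * fs s := by
  have hu : Tendsto (fun s => 1 / 8 * (s * fs s)) atTop atTop :=
    (tendsto_id.atTop_mul_atTop₀ hfs).const_mul_atTop (by norm_num)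
  have hprod := tendsto_mul_comp_const_mul_of_conjugate hf hconj hfs
  filter_upwards [(hL.comp hu).eventually_le_const (show (-1 : ℝ) < -7 / 8 by norm_num),
    hprod.eventually_le_const (show (1 : ℝ) < 9 / 8 by norm_num),
    hprod.eventually_const_lt one_pos, hfs.eventually_gt_atTop 0] with s hlog hupper hpos hfs_pos
  have hf_pos : 0 < f (1 / 8 * (s * fs s)) := pos_of_mul_pos_right hpos hfs_pos.le
  simp only [Function.comp_apply] at hlog
  -- `f(t) (log L(t) + 5/8 f#(s)) ≤ -7/8 + 5/8 * 9/8 < 0`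
  nlinarith

theorem stmt_15_general
    (N : StieltjesFunction ℝ) (hN0 : ∀ E ≤ (0 : ℝ), N E = 0)
    (f fs : ℝ → ℝ)
    (hfslow : ∀ c > 0, Tendsto (fun t : ℝ => f (c * t) / f t) atTop (nhds 1))
    (hconj2 : Tendsto (fun t : ℝ => fs t * f (t * fs t)) atTop (nhds 1))
    (hfstop : Tendsto fs atTop atTop)
    (hyp : Tendsto (fun t : ℝ =>
        f t * Real.log (∫ E in Set.Ioi (0 : ℝ), Real.exp (-t * E) ∂N.measure))
        atTop (nhds (-1))) :
    ∃ E₀ > 0, ∀ E ∈ Set.Ioo (0 : ℝ) E₀, N E ≤ Real.exp (-(fs (1 / E)) / 2) := by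
  obtain ⟨E₀, hE₀, hsmall⟩ := exists_forall_Ioo_of_eventually_atTop <|
    (eventually_log_le_of_conjugate (L := laplaceTransform N.measure) (hfslow _ (by norm_num))
      hconj2 hfstop hyp).and (hfstop.eventually_gt_atTop 0)
  refine ⟨E₀, hE₀, fun E hE => ?_⟩
  obtain ⟨hlog, hfs⟩ := hsmall E hE
  have hEpos : 0 < E := hE.1
  set t := 1 / 8 * (1 / E * fs (1 / E)) with ht
  have htE : t * E = fs (1 / E) / 8 := by rw [ht]; field_simp
  -- a non-integrable function has Bochner integral `0`, so `Ñ(t) ≠ 0` already gives integrability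
  have hL : laplaceTransform N.measure t ≠ 0 := fun h => by
    rw [h, log_zero] at hlog
    linarith
  calc N E ≤ exp (t * E) * laplaceTransform N.measure t :=
        N.le_exp_mul_laplaceTransform (hN0 0 le_rfl) (by positivity)
          (Integrable.of_integral_ne_zero hL) E
    _ ≤ exp (t * E) * exp (log (laplaceTransform N.measure t)) := by gcongr; exact le_exp_log _
    _ = exp (t * E + log (laplaceTransform N.measure t)) := (exp_add _ _).symm
    _ ≤ exp (-(fs (1 / E)) / 2) := exp_le_exp.2 (by rw [htE]; linarith)

/-- From `lim_{t→∞} f(t) log Ñ(t) = -1` one gets `N(E) ≤ exp(-f#(1/E)/2)` for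
sufficiently small `E > 0`. -/
theorem stmt_15
    (N : StieltjesFunction ℝ) (hN0 : ∀ E ≤ (0 : ℝ), N E = 0) (hNne : ∃ E, N E ≠ 0)
    (hfin : ∃ τ > 0,
      (∫⁻ E in Set.Ioi (0 : ℝ), ENNReal.ofReal (Real.exp (-τ * E)) ∂N.measure) < ⊤)
    (f fs : ℝ → ℝ)
    (hfpos : ∀ t > 0, 0 < f t) (hfspos : ∀ t > 0, 0 < fs t)
    (hfmeas : Measurable f) (hfsmeas : Measurable fs)
    (hfslow : ∀ c > 0, Tendsto (fun t : ℝ => f (c * t) / f t) atTop (nhds 1))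
    (hfsslow : ∀ c > 0, Tendsto (fun t : ℝ => fs (c * t) / fs t) atTop (nhds 1))
    (hconj1 : Tendsto (fun t : ℝ => f t * fs (t * f t)) atTop (nhds 1))
    (hconj2 : Tendsto (fun t : ℝ => fs t * f (t * fs t)) atTop (nhds 1))
    (hf0 : Tendsto f atTop (nhds 0))
    (hfstop : Tendsto fs atTop atTop)
    (hyp : Tendsto (fun t : ℝ =>
        f t * Real.log (∫ E in Set.Ioi (0 : ℝ), Real.exp (-t * E) ∂N.measure))
        atTop (nhds (-1))) :
    ∃ E₀ > 0, ∀ E ∈ Set.Ioo (0 : ℝ) E₀, N E ≤ Real.exp (-(fs (1 / E)) / 2) :=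
  stmt_15_general N hN0 f fs hfslow hconj2 hfstop hyp
end
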